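/- arXiv:0906.4769 — 5 statements merged into one kernel-verified Lean document; each statement's English description precedes it below -/
import Mathlib

section
/- Let λ be a partition of n and let v_1, …, v_n be vectors in a finite-dimensional complex vector space V. If (v_1 ⊗ ⋯ ⊗ v_n) T_λ ≠ 0, then the multiset {v_1, …, v_n} can be partitioned into linearly independent sets whose sizes are the parts of the transpose partition λᵀ. -/
/-!
Common definitions: the right action of `Sₙ` on `V^{⊗n}` by permuting tensor positions,
the diagonal action of `End(V)` (hence `GL(V)`), the span `G(w)` of a `GL(V)`-orbit,
Young symmetrizers, the irreducible character `χ^λ` of `Sₙ`, the symmetrizer `T_λ`,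
Gamas's condition, highest weight vectors ("λ appears in M"), the rank partition and
dominance order.
-/

open scoped TensorProduct
open Finset

noncomputable section

namespace Gamas

/-- The `n`-th tensor power of `V` over `ℂ`. -/
abbrev TP (n : ℕ) (V : Type*) [AddCommGroup V] [Module ℂ V] : Type _ :=
  ⨂[ℂ] _ : Fin n, V

variable (n : ℕ) (V : Type*) [AddCommGroup V] [Module ℂ V]

/-- The right action of `σ ∈ Sₙ` on `V^{⊗n}`, permuting tensor positions:
`v₁ ⊗ ⋯ ⊗ vₙ ↦ v_{σ(1)} ⊗ ⋯ ⊗ v_{σ(n)}`. -/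
def permAct (σ : Equiv.Perm (Fin n)) : TP n V →ₗ[ℂ] TP n V :=
  PiTensorProduct.lift
    ((PiTensorProduct.tprod ℂ (s := fun _ : Fin n => V)).domDomCongr σ)

/-- The diagonal action of an endomorphism `A` of `V` on `V^{⊗n}`:
`v₁ ⊗ ⋯ ⊗ vₙ ↦ A v₁ ⊗ ⋯ ⊗ A vₙ`. -/
def glAct (A : Module.End ℂ V) : TP n V →ₗ[ℂ] TP n V :=
  PiTensorProduct.map (fun _ => A)

/-- `G(w)`: the linear span of the `GL(V)`-orbit of a tensor `w ∈ V^{⊗n}`. -/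
def orbitSpan (w : TP n V) : Submodule ℂ (TP n V) :=
  Submodule.span ℂ
    (Set.range fun g : (Module.End ℂ V)ˣ => glAct n V (g : Module.End ℂ V) w)

/-- The group algebra `ℂ Sₙ`. -/
abbrev GA (n : ℕ) : Type _ := MonoidAlgebra ℂ (Equiv.Perm (Fin n))

/-- The group of permutations preserving each row of a filling `T : Fin n → ℕ × ℕ`
(first coordinate = row index, second coordinate = column index), as a finset. -/
def rowGroup (T : Fin n → ℕ × ℕ) : Finset (Equiv.Perm (Fin n)) :=
  Finset.univ.filter fun σ => ∀ i, (T (σ i)).1 = (T i).1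

/-- The group of permutations preserving each column of a filling, as a finset. -/
def colGroup (T : Fin n → ℕ × ℕ) : Finset (Equiv.Perm (Fin n)) :=
  Finset.univ.filter fun σ => ∀ i, (T (σ i)).2 = (T i).2

/-- The row symmetrizer `a_T = Σ_{σ ∈ Row(T)} σ` in `ℂSₙ`. -/
def aElt (T : Fin n → ℕ × ℕ) : GA n :=
  ∑ σ ∈ rowGroup n T, MonoidAlgebra.single σ 1

/-- The column antisymmetrizer `b_T = Σ_{σ ∈ Col(T)} sign(σ) σ` in `ℂSₙ`. -/
def bElt (T : Fin n → ℕ × ℕ) : GA n :=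
  ∑ σ ∈ colGroup n T, MonoidAlgebra.single σ ((Equiv.Perm.sign σ : ℤ) : ℂ)

/-- The Young symmetrizer `b_T a_T` of a filling `T`. -/
def youngElt (T : Fin n → ℕ × ℕ) : GA n := bElt n T * aElt n T

/-- The right ideal `c · ℂSₙ` generated by `c`. -/
def rightIdeal (c : GA n) : Submodule ℂ (GA n) :=
  LinearMap.range (LinearMap.mulLeft ℂ c)

lemma rightIdeal_invariant (c : GA n) (g : Equiv.Perm (Fin n)) :
    ∀ x ∈ rightIdeal n c, x * MonoidAlgebra.single g (1 : ℂ) ∈ rightIdeal n c := by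
  rintro x ⟨y, rfl⟩
  refine ⟨y * MonoidAlgebra.single g 1, ?_⟩
  simp [LinearMap.mulLeft_apply, mul_assoc]

/-- The character of the right `ℂSₙ`-module `c · ℂSₙ`: the trace of right
multiplication by `g` on the right ideal generated by `c`. -/
def charOfIdeal (c : GA n) (g : Equiv.Perm (Fin n)) : ℂ :=
  LinearMap.trace ℂ (rightIdeal n c)
    ((LinearMap.mulRight ℂ (MonoidAlgebra.single g (1 : ℂ))).restrict
      (rightIdeal_invariant n c g))

/-- A canonical bijective filling of the cells of the Young diagram `lam`
(with `lam.card = n`) by the tensor positions `0, …, n-1`. -/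
def canonicalFilling (lam : YoungDiagram) (hl : lam.card = n) : Fin n → ℕ × ℕ :=
  fun i => (lam.cells.equivFin.symm (Fin.cast hl.symm i) : ℕ × ℕ)

/-- The irreducible character `χ^λ` of `Sₙ` corresponding to the partition `λ` of `n`
(encoded as a Young diagram with `n` cells): the character of the irreducible right
`ℂSₙ`-module generated by the Young symmetrizer of a tableau of shape `λ`. -/
def youngChar (lam : YoungDiagram) (hl : lam.card = n) : Equiv.Perm (Fin n) → ℂ :=
  charOfIdeal n (youngElt n (canonicalFilling n lam hl))

/-- The symmetrization operator `T_λ = (χ^λ(1)/n!) Σ_{σ ∈ Sₙ} χ^λ(σ) σ`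
acting on `V^{⊗n}` (via the right action of `Sₙ` on tensor positions). -/
def Tproj (lam : YoungDiagram) (hl : lam.card = n) : TP n V →ₗ[ℂ] TP n V :=
  (youngChar n lam hl 1 / (n.factorial : ℂ)) •
    ∑ σ : Equiv.Perm (Fin n), youngChar n lam hl σ • permAct n V σ

/-- Gamas's condition for `λ`: the multiset of vectors `v 0, …, v (n-1)` can be
partitioned into linearly independent sets whose sizes are the parts of the transpose
partition `λᵀ`; the `k`-th block has size the `k`-th part `λᵀ_k` of `λᵀ` (blocks beyond
the number of parts of `λᵀ` being empty). -/
def GamasCondition (v : Fin n → V) (lam : YoungDiagram) : Prop :=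
  ∃ c : Fin n → ℕ,
    (∀ k, LinearIndependent ℂ (fun i : {i : Fin n // c i = k} => v i)) ∧
    (∀ k, (Finset.univ.filter fun i => c i = k).card = lam.transpose.rowLen k)

/-- The diagonal endomorphism of `V` with eigenvalue `t i` on the basis vector `b i`. -/
def diagMap {d : ℕ} (b : Module.Basis (Fin d) ℂ V) (t : Fin d → ℂˣ) : Module.End ℂ V :=
  b.constr ℂ (fun i => (t i : ℂ) • b i)

/-- `g` is upper-triangular unipotent with respect to the ordered basis `b`:
`g (b j) = b j + (a linear combination of b i with i < j)`. -/
def IsUnipotentUpper {d : ℕ} (b : Module.Basis (Fin d) ℂ V) (g : Module.End ℂ V) : Prop :=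
  ∀ j, g (b j) - b j ∈ Submodule.span ℂ (b '' {i | i < j})

/-- The partition with parts `f 0 ≥ f 1 ≥ ⋯` appears in the `GL(V)`-submodule `M` of
`V^{⊗n}`: `M` contains a nonzero highest weight vector of weight `f`, i.e. a vector on
which every diagonal element (w.r.t. some ordered basis of `V`) acts by `∏ tᵢ^{f i}` and
which is fixed by every upper-triangular unipotent element. -/
def Appears (f : ℕ → ℕ) (M : Submodule ℂ (TP n V)) : Prop :=
  ∃ (d : ℕ) (b : Module.Basis (Fin d) ℂ V) (u : TP n V),
    u ∈ M ∧ u ≠ 0 ∧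
    (∀ t : Fin d → ℂˣ,
      glAct n V (diagMap V b t) u = (∏ i, (t i : ℂ) ^ f (i : ℕ)) • u) ∧
    (∀ g : Module.End ℂ V, IsUnipotentUpper V b g → glAct n V g u = u)

/-- The partition with parts `f 0 ≥ f 1 ≥ ⋯` appears in the twist `det_V ⊗ M` of the
`GL(V)`-submodule `M` of `V^{⊗m}` (where `g` acts on `det_V ⊗ M` by `det(g) • g·-`):
`M` contains a nonzero vector which is a highest weight vector of weight `f` for the
twisted action. -/
def AppearsDet (f : ℕ → ℕ) (M : Submodule ℂ (TP n V)) : Prop :=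
  ∃ (d : ℕ) (b : Module.Basis (Fin d) ℂ V) (u : TP n V),
    u ∈ M ∧ u ≠ 0 ∧
    (∀ t : Fin d → ℂˣ,
      (∏ i, (t i : ℂ)) • glAct n V (diagMap V b t) u =
        (∏ i, (t i : ℂ) ^ f (i : ℕ)) • u) ∧
    (∀ g : Module.End ℂ V, IsUnipotentUpper V b g →
      LinearMap.det g • glAct n V g u = u)

/-- The right action of the row symmetrizer `a_T` on `V^{⊗n}`. -/
def aOp (T : Fin n → ℕ × ℕ) : TP n V →ₗ[ℂ] TP n V :=
  ∑ σ ∈ rowGroup n T, permAct n V σ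

/-- The right action of the column antisymmetrizer `b_T = Σ_{σ ∈ Col(T)} sign(σ) σ`
on `V^{⊗n}`. -/
def bOp (T : Fin n → ℕ × ℕ) : TP n V →ₗ[ℂ] TP n V :=
  ∑ σ ∈ colGroup n T, ((Equiv.Perm.sign σ : ℤ) : ℂ) • permAct n V σ

/-- The right action of `b_B = Σ_{σ ∈ S_B} sign(σ) σ` on `V^{⊗n}`, where
`B = {0, …, k-1}` and `S_B` is the subgroup of permutations supported on `B`. -/
def bBOp (k : ℕ) : TP n V →ₗ[ℂ] TP n V :=
  ∑ σ ∈ Finset.univ.filter (fun σ : Equiv.Perm (Fin n) => ∀ i, σ i ≠ i → (i : ℕ) < k),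
    ((Equiv.Perm.sign σ : ℤ) : ℂ) • permAct n V σ

open Classical in
/-- The largest size of a union of `k` linearly independent subsets of the multiset
`{v 0, …, v (n-1)}` (subsets of the index set `Fin n`). -/
def maxUnion (v : Fin n → V) (k : ℕ) : ℕ :=
  Finset.univ.sup fun S : Fin k → Finset (Fin n) =>
    if ∀ j, LinearIndependent ℂ (fun i : (S j : Finset (Fin n)) => v i)
    then (Finset.univ.biUnion S).card else 0

/-- The `i`-th part (0-indexed) of the rank partition `ρ` of `{v 0, …, v (n-1)}`:
`ρ 0 + ⋯ + ρ (k-1)` is the largest size of a union of `k` linearly independent subsets. -/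
def rankPart (v : Fin n → V) (i : ℕ) : ℕ :=
  maxUnion n V v (i + 1) - maxUnion n V v i

/-- The `j`-th part (0-indexed) of the transpose `ρᵀ` of the rank partition:
the number of parts of `ρ` that are at least `j + 1` (all parts of `ρ` beyond the first
`n` vanish). -/
def rankPartT (v : Fin n → V) (j : ℕ) : ℕ :=
  ((Finset.range n).filter fun i => j + 1 ≤ rankPart n V v i).card

/-- `f` is dominated by `g` in dominance order, as partitions of the same number with at
most `n` nonzero parts (parts listed in decreasing order, padded by zeros): every partial
sum of `f` is at most the corresponding partial sum of `g`, and the totals agree. -/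
def DominatedBy (f g : ℕ → ℕ) : Prop :=
  (∀ N, ∑ j ∈ Finset.range N, f j ≤ ∑ j ∈ Finset.range N, g j) ∧
  (∑ j ∈ Finset.range n, f j = ∑ j ∈ Finset.range n, g j)

end Gamas



/-! ### Auxiliary machinery for the proof -/

namespace GamasAux

open Gamas

variable (n : ℕ) (V : Type*) [AddCommGroup V] [Module ℂ V]

lemma permAct_tprod (σ : Equiv.Perm (Fin n)) (v : Fin n → V) :
    permAct n V σ (PiTensorProduct.tprod ℂ v) = PiTensorProduct.tprod ℂ (fun i => v (σ i)) := by
  simp [permAct, MultilinearMap.domDomCongr]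

lemma permAct_comp (σ τ : Equiv.Perm (Fin n)) :
    (permAct n V τ) ∘ₗ (permAct n V σ) = permAct n V (σ * τ) := by
  apply PiTensorProduct.ext
  ext v
  simp [permAct_tprod]

/-- The (anti-)action of the group algebra on `V^{⊗n}`. -/
def actA : GA n →ₗ[ℂ] (TP n V →ₗ[ℂ] TP n V) :=
  (Finsupp.lsum ℂ fun σ => LinearMap.toSpanSingleton ℂ _ (permAct n V σ)) ∘ₗ
    (MonoidAlgebra.coeffLinearEquiv ℂ).toLinearMap

@[simp] lemma actA_single (σ : Equiv.Perm (Fin n)) (c : ℂ) :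
    actA n V (MonoidAlgebra.single σ c) = c • permAct n V σ := by
  show (Finsupp.lsum ℂ fun σ => LinearMap.toSpanSingleton ℂ _ (permAct n V σ))
      (Finsupp.single σ c) = c • permAct n V σ
  rw [Finsupp.lsum_single, LinearMap.toSpanSingleton_apply]

lemma actA_mul (x y : GA n) : actA n V (x * y) = (actA n V y) ∘ₗ (actA n V x) := by
  induction x using MonoidAlgebra.induction_linear with
  | zero => simp
  | add f g hf hg => simp only [add_mul, map_add, hf, hg, LinearMap.comp_add]
  | single σ c =>
    induction y using MonoidAlgebra.induction_linear with
    | zero => simp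
    | add f g hf hg => simp only [mul_add, map_add, hf, hg, LinearMap.add_comp]
    | single τ d =>
      show actA n V (MonoidAlgebra.single σ c * MonoidAlgebra.single τ d) = _
      rw [MonoidAlgebra.single_mul_single]
      simp only [actA_single, LinearMap.smul_comp, LinearMap.comp_smul, ← permAct_comp,
        smul_smul, mul_comm]

/-- The antipode of the group algebra. -/
def antip : GA n →ₗ[ℂ] GA n :=
  (Finsupp.lsum ℂ fun σ => MonoidAlgebra.lsingle (R := ℂ) σ⁻¹) ∘ₗ
    (MonoidAlgebra.coeffLinearEquiv ℂ).toLinearMap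

@[simp] lemma antip_single (σ : Equiv.Perm (Fin n)) (c : ℂ) :
    antip n (MonoidAlgebra.single σ c) = MonoidAlgebra.single σ⁻¹ c := by
  show (Finsupp.lsum ℂ fun σ => MonoidAlgebra.lsingle (R := ℂ) σ⁻¹) (Finsupp.single σ c) = _
  rw [Finsupp.lsum_single]; rfl

lemma antip_apply (x : GA n) (g : Equiv.Perm (Fin n)) : (antip n x).coeff g = x.coeff g⁻¹ := by
  induction x using MonoidAlgebra.induction_linear with
  | zero => simp
  | add f h hf hh =>
    rw [map_add, MonoidAlgebra.coeff_add, MonoidAlgebra.coeff_add, Finsupp.add_apply, Finsupp.add_apply, hf, hh]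
  | single σ c =>
    rw [antip_single]
    show Finsupp.single σ⁻¹ c g = Finsupp.single σ c g⁻¹
    rw [Finsupp.single_apply, Finsupp.single_apply]
    congr 1
    simp only [eq_iff_iff]
    constructor
    · rintro rfl; simp
    · rintro rfl; simp

lemma antip_antip (x : GA n) : antip n (antip n x) = x := by
  ext g; rw [antip_apply, antip_apply, inv_inv]

lemma antip_mul (x y : GA n) : antip n (x * y) = antip n y * antip n x := by
  induction x using MonoidAlgebra.induction_linear with
  | zero => simp
  | add f h hf hh => rw [add_mul, map_add, hf, hh, map_add, mul_add]
  | single σ c =>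
    induction y using MonoidAlgebra.induction_linear with
    | zero => simp
    | add f h hf hh => rw [mul_add, map_add, hf, hh, map_add, add_mul]
    | single τ d =>
      show antip n (MonoidAlgebra.single σ c * MonoidAlgebra.single τ d) = _
      rw [MonoidAlgebra.single_mul_single, antip_single, antip_single, antip_single,
        MonoidAlgebra.single_mul_single, mul_inv_rev, mul_comm d c]

/-- Existence of a "left unit" generator for the right ideal `c·A`. -/
lemma exists_left_unit (c : GA n) :
    ∃ e : GA n, (∃ y, e = c * y) ∧ ∀ x : GA n, e * (c * x) = c * x := by
  classical
  haveI : NeZero ((Fintype.card (Equiv.Perm (Fin n)) : ℂ)) :=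
    ⟨by exact_mod_cast Fintype.card_pos.ne'⟩
  obtain ⟨J, hJ⟩ := MonoidAlgebra.Submodule.exists_isCompl (k := ℂ)
      (G := Equiv.Perm (Fin n)) (Submodule.span (GA n) {antip n c})
  set I : Submodule (GA n) (GA n) := Submodule.span (GA n) {antip n c} with hI
  set π := I.linearProjOfIsCompl J hJ with hπ
  set e' : GA n := (π 1 : GA n) with he'
  have he'I : e' ∈ I := (π 1).2
  have hproj : ∀ x : GA n, x ∈ I → x * e' = x := by
    intro x hx
    have h1 : π x = ⟨x, hx⟩ := Submodule.linearProjOfIsCompl_apply_left hJ ⟨x, hx⟩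
    have h2 : π x = x • π 1 := by
      conv_lhs => rw [show x = x • (1 : GA n) by rw [smul_eq_mul, mul_one]]
      rw [map_smul]
    have h3 := congrArg (Subtype.val) (h1.symm.trans h2)
    simp only [Submodule.coe_smul_of_tower, smul_eq_mul] at h3
    exact h3.symm
  obtain ⟨a, ha⟩ := Submodule.mem_span_singleton.mp he'I
  rw [smul_eq_mul] at ha
  refine ⟨antip n e', ⟨antip n a, ?_⟩, ?_⟩
  · rw [← ha, antip_mul, antip_antip]
  · intro x
    have hmem : antip n (c * x) ∈ I := by
      rw [antip_mul]
      exact Submodule.mem_span_singleton.mpr ⟨antip n x, by rw [smul_eq_mul]⟩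
    have h4 := hproj _ hmem
    have h5 := congrArg (antip n) h4
    rwa [antip_mul, antip_antip] at h5

instance : Module.Finite ℂ (GA n) :=
  Module.Finite.of_basis (MonoidAlgebra.basis _ ℂ)
instance : Module.Free ℂ (GA n) :=
  Module.Free.of_basis (MonoidAlgebra.basis _ ℂ)

lemma trace_finsupp {ι : Type*} [Fintype ι] [DecidableEq ι] (F : (ι →₀ ℂ) →ₗ[ℂ] (ι →₀ ℂ)) :
    LinearMap.trace ℂ (ι →₀ ℂ) F = ∑ i : ι, F (Finsupp.single i 1) i := by
  rw [LinearMap.trace_eq_matrix_trace ℂ (Finsupp.basisSingleOne (R := ℂ) (ι := ι))]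
  rw [Matrix.trace]
  congr 1
  ext i
  rw [Matrix.diag_apply, LinearMap.toMatrix_apply]
  simp [Finsupp.coe_basisSingleOne]

lemma trace_GA (F : GA n →ₗ[ℂ] GA n) :
    LinearMap.trace ℂ (GA n) F
      = ∑ h : Equiv.Perm (Fin n), (F (MonoidAlgebra.single h 1)).coeff h := by
  rw [← LinearMap.trace_conj' F (MonoidAlgebra.coeffLinearEquiv ℂ), trace_finsupp]; rfl

lemma charOfIdeal_eq (c e : GA n) (hey : ∃ y, e = c * y)
    (he : ∀ x : GA n, e * (c * x) = c * x) (g : Equiv.Perm (Fin n)) :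
    charOfIdeal n c g = ∑ h : Equiv.Perm (Fin n), e.coeff (h * g⁻¹ * h⁻¹) := by
  classical
  obtain ⟨y, hy⟩ := hey
  have hmem : ∀ z ∈ rightIdeal n c, e * z = z := by
    rintro z ⟨x, rfl⟩
    exact he x
  have hemem : ∀ x : GA n, e * x ∈ rightIdeal n c := by
    intro x
    exact ⟨y * x, by simp only [LinearMap.mulLeft_apply]; rw [← mul_assoc, ← hy]⟩
  set M := rightIdeal n c with hM
  set π : GA n →ₗ[ℂ] M := (LinearMap.mulLeft ℂ e).codRestrict M hemem with hπ
  set f : M →ₗ[ℂ] GA n :=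
    (LinearMap.mulRight ℂ (MonoidAlgebra.single g (1:ℂ))).comp M.subtype with hf
  have key : ((LinearMap.mulRight ℂ (MonoidAlgebra.single g (1 : ℂ))).restrict
      (rightIdeal_invariant n c g)) = π.comp f := by
    refine LinearMap.ext fun m => Subtype.ext ?_
    show (m : GA n) * MonoidAlgebra.single g 1 = e * ((m : GA n) * MonoidAlgebra.single g 1)
    exact (hmem _ (rightIdeal_invariant n c g m m.2)).symm
  rw [charOfIdeal, key, LinearMap.trace_comp_comm']
  have hfπ : f.comp π = (LinearMap.mulRight ℂ (MonoidAlgebra.single g (1:ℂ))).comp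
      (LinearMap.mulLeft ℂ e) := rfl
  rw [hfπ, trace_GA]
  congr 1
  ext h
  show (((e * MonoidAlgebra.single h 1) * MonoidAlgebra.single g 1 : GA n).coeff h) = _
  rw [MonoidAlgebra.mul_single_apply, MonoidAlgebra.mul_single_apply]
  rw [mul_one, mul_one]

lemma sum_single_char (c e : GA n) (hey : ∃ y, e = c * y)
    (he : ∀ x : GA n, e * (c * x) = c * x) :
    (∑ g : Equiv.Perm (Fin n), MonoidAlgebra.single g (charOfIdeal n c g))
      = ∑ h : Equiv.Perm (Fin n),
          MonoidAlgebra.single h⁻¹ (1:ℂ) * antip n e * MonoidAlgebra.single h 1 := by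
  classical
  ext k
  rw [MonoidAlgebra.coeff_sum, MonoidAlgebra.coeff_sum, Finsupp.finset_sum_apply, Finsupp.finset_sum_apply]
  have lhs : ∑ g : Equiv.Perm (Fin n),
      (MonoidAlgebra.single g (charOfIdeal n c g) : GA n).coeff k = charOfIdeal n c k := by
    rw [Finset.sum_eq_single k]
    · simp [Finsupp.single_apply]
    · intro g _ hg
      simp [Finsupp.single_apply, hg]
    · intro hk; exact absurd (Finset.mem_univ k) hk
  rw [lhs, charOfIdeal_eq n c e hey he k]
  congr 1
  ext h
  refine Eq.symm ?_
  show ((MonoidAlgebra.single h⁻¹ (1:ℂ) * antip n e * MonoidAlgebra.single h 1 : GA n).coeff k)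
    = e.coeff (h * k⁻¹ * h⁻¹)
  rw [MonoidAlgebra.mul_single_apply, mul_one, MonoidAlgebra.single_mul_apply, one_mul,
    antip_apply]
  congr 1

lemma colGroup_inv_mem {T : Fin n → ℕ × ℕ} {σ : Equiv.Perm (Fin n)}
    (h : σ ∈ colGroup n T) : σ⁻¹ ∈ colGroup n T := by
  simp only [colGroup, Finset.mem_filter, Finset.mem_univ, true_and] at *
  intro i
  have := h (σ⁻¹ i)
  simpa using this.symm

lemma rowGroup_inv_mem {T : Fin n → ℕ × ℕ} {σ : Equiv.Perm (Fin n)}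
    (h : σ ∈ rowGroup n T) : σ⁻¹ ∈ rowGroup n T := by
  simp only [rowGroup, Finset.mem_filter, Finset.mem_univ, true_and] at *
  intro i
  have := h (σ⁻¹ i)
  simpa using this.symm

lemma antip_aElt (T : Fin n → ℕ × ℕ) : antip n (aElt n T) = aElt n T := by
  rw [aElt, map_sum]
  refine Finset.sum_nbij' (i := fun σ => σ⁻¹) (j := fun σ => σ⁻¹) ?_ ?_ ?_ ?_ ?_
  · exact fun σ hσ => rowGroup_inv_mem n hσ
  · exact fun σ hσ => rowGroup_inv_mem n hσ
  · intro σ _; simp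
  · intro σ _; simp
  · intro σ _; rw [antip_single]

lemma antip_bElt (T : Fin n → ℕ × ℕ) : antip n (bElt n T) = bElt n T := by
  rw [bElt, map_sum]
  refine Finset.sum_nbij' (i := fun σ => σ⁻¹) (j := fun σ => σ⁻¹) ?_ ?_ ?_ ?_ ?_
  · exact fun σ hσ => colGroup_inv_mem n hσ
  · exact fun σ hσ => colGroup_inv_mem n hσ
  · intro σ _; simp
  · intro σ _; simp
  · intro σ _; rw [antip_single, Equiv.Perm.sign_inv]

lemma actA_bElt_apply (T : Fin n → ℕ × ℕ) (w : Fin n → V) :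
    actA n V (bElt n T) (PiTensorProduct.tprod ℂ w)
      = ∑ σ ∈ colGroup n T, ((Equiv.Perm.sign σ : ℤ) : ℂ) •
          PiTensorProduct.tprod ℂ (fun i => w (σ i)) := by
  rw [bElt, map_sum, LinearMap.sum_apply]
  refine Finset.sum_congr rfl fun σ _ => ?_
  rw [actA_single, LinearMap.smul_apply, permAct_tprod]

/-- Antisymmetrization kills a tensor with two equal entries in the same column. -/
lemma bElt_kill (T : Fin n → ℕ × ℕ) (w : Fin n → V) (p q : Fin n) (hpq : p ≠ q)
    (hcol : (T p).2 = (T q).2) (hval : w p = w q) :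
    actA n V (bElt n T) (PiTensorProduct.tprod ℂ w) = 0 := by
  classical
  rw [actA_bElt_apply]
  have hwswap : ∀ x, w (Equiv.swap p q x) = w x := by
    intro x
    rcases eq_or_ne x p with rfl | hxp
    · rw [Equiv.swap_apply_left]; exact hval.symm
    rcases eq_or_ne x q with rfl | hxq
    · rw [Equiv.swap_apply_right]; exact hval
    · rw [Equiv.swap_apply_of_ne_of_ne hxp hxq]
  have hTswap : ∀ x, (T (Equiv.swap p q x)).2 = (T x).2 := by
    intro x
    rcases eq_or_ne x p with rfl | hxp
    · rw [Equiv.swap_apply_left]; exact hcol.symm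
    rcases eq_or_ne x q with rfl | hxq
    · rw [Equiv.swap_apply_right]; exact hcol
    · rw [Equiv.swap_apply_of_ne_of_ne hxp hxq]
  refine Finset.sum_involution (fun σ _ => Equiv.swap p q * σ) ?_ ?_ ?_ ?_
  · intro σ hσ
    have h1 : (fun i => w ((Equiv.swap p q * σ) i)) = fun i => w (σ i) := by
      funext i
      rw [Equiv.Perm.mul_apply, hwswap]
    rw [h1, Equiv.Perm.sign_mul, Equiv.Perm.sign_swap hpq]
    push_cast
    rw [neg_mul, one_mul, neg_smul, add_neg_cancel]
  · intro σ _ _ heq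
    have h2 : Equiv.swap p q = 1 := mul_right_cancel (heq.trans (one_mul σ).symm)
    exact hpq (Equiv.swap_eq_one_iff.mp h2)
  · intro σ hσ
    simp only [colGroup, Finset.mem_filter, Finset.mem_univ, true_and] at hσ ⊢
    intro i
    rw [Equiv.Perm.mul_apply, hTswap]
    exact hσ i
  · intro σ _
    show Equiv.swap p q * (Equiv.swap p q * σ) = σ
    rw [← mul_assoc, Equiv.swap_mul_self, one_mul]

/-- If the full column antisymmetrizer does not kill a pure tensor, then the entries in
each column are linearly independent. -/
lemma col_indep (T : Fin n → ℕ × ℕ) (u : Fin n → V)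
    (h : actA n V (bElt n T) (PiTensorProduct.tprod ℂ u) ≠ 0) (k : ℕ) :
    LinearIndependent ℂ (fun i : {i : Fin n // (T i).2 = k} => u i) := by
  classical
  by_contra hdep
  apply h
  obtain ⟨g, hsum, i0, hi0⟩ := Fintype.not_linearIndependent_iff.mp hdep
  set S := (Finset.univ.erase i0) with hS
  have h' : g i0 • u i0.1 + ∑ i ∈ S, g i • u i.1 = 0 := by
    rw [← hsum, hS]
    exact Finset.add_sum_erase _ (fun i => g i • u i.1) (Finset.mem_univ i0)
  have h3 : g i0 • u i0.1 = -(∑ i ∈ S, g i • u i.1) := eq_neg_of_add_eq_zero_left h'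
  have hui0 : u i0.1 = ∑ i ∈ S, (-(g i0)⁻¹ * g i) • u i.1 := by
    have h4 : u i0.1 = (g i0)⁻¹ • (g i0 • u i0.1) := (inv_smul_smul₀ hi0 _).symm
    rw [h4, h3, smul_neg, Finset.smul_sum]
    rw [← Finset.sum_neg_distrib]
    refine Finset.sum_congr rfl fun i _ => ?_
    rw [smul_smul, ← neg_smul, neg_mul]
  have hsplit : (PiTensorProduct.tprod ℂ u : TP n V)
      = ∑ i ∈ S, (-(g i0)⁻¹ * g i) • PiTensorProduct.tprod ℂ (Function.update u i0.1 (u i.1)) := by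
    conv_lhs => rw [← Function.update_eq_self i0.1 u, hui0]
    rw [MultilinearMap.map_update_sum]
    refine Finset.sum_congr rfl fun i _ => ?_
    rw [MultilinearMap.map_update_smul]
  rw [hsplit, map_sum]
  refine Finset.sum_eq_zero fun i hi => ?_
  have hine : i ≠ i0 := Finset.ne_of_mem_erase hi
  have hne' : (i : Fin n) ≠ (i0 : Fin n) := fun hh => hine (Subtype.ext hh)
  rw [map_smul, bElt_kill n V T _ i.1 i0.1 hne' (i.2.trans i0.2.symm) ?_, smul_zero]
  rw [Function.update_of_ne hne', Function.update_self]

lemma actA_apply_tprod (x : GA n) (v : Fin n → V) :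
    actA n V x (PiTensorProduct.tprod ℂ v)
      = ∑ σ ∈ x.coeff.support, x.coeff σ • PiTensorProduct.tprod ℂ (fun i => v (σ i)) := by
  conv_lhs => rw [← MonoidAlgebra.sum_coeff_single x]
  rw [Finsupp.sum, map_sum, LinearMap.sum_apply]
  exact Finset.sum_congr rfl fun σ _ => by
    rw [actA_single, LinearMap.smul_apply, permAct_tprod]

lemma card_col (lam : YoungDiagram) (hl : lam.card = n) (k : ℕ) :
    (Finset.univ.filter fun i : Fin n => (canonicalFilling n lam hl i).2 = k).card
      = lam.transpose.rowLen k := by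
  classical
  rw [YoungDiagram.rowLen_transpose, YoungDiagram.colLen_eq_card]
  refine Finset.card_bij (fun i _ => (canonicalFilling n lam hl i : ℕ × ℕ)) ?_ ?_ ?_
  · intro i hi
    rw [YoungDiagram.mem_col_iff]
    refine ⟨?_, (Finset.mem_filter.mp hi).2⟩
    have := (lam.cells.equivFin.symm (Fin.cast hl.symm i)).2
    rwa [YoungDiagram.mem_cells] at this
  · intro a _ b _ hab
    have h1 : lam.cells.equivFin.symm (Fin.cast hl.symm a)
        = lam.cells.equivFin.symm (Fin.cast hl.symm b) := Subtype.ext hab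
    have h2 := lam.cells.equivFin.symm.injective h1
    have h3 := congrArg Fin.val h2
    exact Fin.ext h3
  · intro c hc
    rw [YoungDiagram.mem_col_iff] at hc
    have hcc : c ∈ lam.cells := (YoungDiagram.mem_cells _).mpr hc.1
    refine ⟨Fin.cast hl (lam.cells.equivFin ⟨c, hcc⟩), ?_, ?_⟩
    · refine Finset.mem_filter.mpr ⟨Finset.mem_univ _, ?_⟩
      show ((lam.cells.equivFin.symm (Fin.cast hl.symm (Fin.cast hl (lam.cells.equivFin ⟨c, hcc⟩)))
        : ℕ × ℕ)).2 = k
      simp [hc.2]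
    · show ((lam.cells.equivFin.symm (Fin.cast hl.symm (Fin.cast hl (lam.cells.equivFin ⟨c, hcc⟩)))
        : ℕ × ℕ)) = c
      simp

end GamasAux

open Gamas in
/-- If `(v₁ ⊗ ⋯ ⊗ vₙ) T_λ ≠ 0` for a partition `λ` of `n` and vectors
`v 0, …, v (n-1)` in a finite-dimensional complex vector space, then the multiset `{vᵢ}`
can be partitioned into linearly independent sets whose sizes are the parts of the
transpose of `λ`. -/
theorem gamas_necessity (n : ℕ) (V : Type*) [AddCommGroup V] [Module ℂ V]
    [FiniteDimensional ℂ V] (lam : YoungDiagram) (hl : lam.card = n) (v : Fin n → V)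
    (hne : Tproj n V lam hl (PiTensorProduct.tprod ℂ v) ≠ 0) :
    GamasCondition n V v lam := by
  classical
  open GamasAux in
  set T := canonicalFilling n lam hl with hT
  have hchar : youngChar n lam hl = charOfIdeal n (youngElt n T) := rfl
  -- Step 1: the unnormalized symmetrizer does not vanish on the tensor.
  have h1 : (∑ σ : Equiv.Perm (Fin n), youngChar n lam hl σ • permAct n V σ)
      (PiTensorProduct.tprod ℂ v) ≠ 0 := by
    intro h0
    apply hne
    rw [Tproj, LinearMap.smul_apply, h0, smul_zero]
  obtain ⟨e, hey, he⟩ := exists_left_unit n (youngElt n T)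
  have hz : actA n V (∑ g : Equiv.Perm (Fin n), MonoidAlgebra.single g (youngChar n lam hl g))
      = ∑ σ : Equiv.Perm (Fin n), youngChar n lam hl σ • permAct n V σ := by
    rw [map_sum]
    exact Finset.sum_congr rfl fun σ _ => actA_single n V σ _
  have hzz : (∑ g : Equiv.Perm (Fin n), MonoidAlgebra.single g (youngChar n lam hl g))
      = ∑ h : Equiv.Perm (Fin n),
          MonoidAlgebra.single h⁻¹ (1:ℂ) * antip n e * MonoidAlgebra.single h 1 := by
    rw [hchar]
    exact sum_single_char n (youngElt n T) e hey he
  have h2 : actA n V (∑ h : Equiv.Perm (Fin n),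
      MonoidAlgebra.single h⁻¹ (1:ℂ) * antip n e * MonoidAlgebra.single h 1)
      (PiTensorProduct.tprod ℂ v) ≠ 0 := by
    rw [← hzz, hz]; exact h1
  rw [map_sum, LinearMap.sum_apply] at h2
  obtain ⟨h, -, h3⟩ := Finset.exists_ne_zero_of_sum_ne_zero h2
  obtain ⟨y, hy⟩ := hey
  have hae : antip n e = antip n y * aElt n T * bElt n T := by
    rw [hy, youngElt, antip_mul, antip_mul, antip_aElt, antip_bElt, mul_assoc]
  set q : GA n := MonoidAlgebra.single h⁻¹ (1:ℂ) * (antip n y * aElt n T) with hq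
  have hterm : MonoidAlgebra.single h⁻¹ (1:ℂ) * antip n e * MonoidAlgebra.single h 1
      = (q * bElt n T) * MonoidAlgebra.single h 1 := by
    rw [hae, hq]
    simp only [mul_assoc]
  rw [hterm, actA_mul, actA_mul] at h3
  have h4 : actA n V (bElt n T) (actA n V q (PiTensorProduct.tprod ℂ v)) ≠ 0 := by
    intro h0
    apply h3
    rw [LinearMap.comp_apply, LinearMap.comp_apply, h0, map_zero]
  rw [actA_apply_tprod, map_sum] at h4
  obtain ⟨σ, -, h6⟩ := Finset.exists_ne_zero_of_sum_ne_zero h4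
  rw [map_smul] at h6
  have h7 : actA n V (bElt n T) (PiTensorProduct.tprod ℂ (fun i => v (σ i))) ≠ 0 :=
    fun h0 => h6 (by rw [h0, smul_zero])
  have hcols := fun k => col_indep n V T (fun i => v (σ i)) h7 k
  refine ⟨fun j => (T (σ⁻¹ j)).2, ?_, ?_⟩
  · intro k
    set F : {j : Fin n // (T (σ⁻¹ j)).2 = k} → {i : Fin n // (T i).2 = k} :=
      fun j => ⟨σ⁻¹ j.1, j.2⟩ with hF
    have hFinj : Function.Injective F := by
      intro a b hab
      have := congrArg Subtype.val hab
      exact Subtype.ext (σ⁻¹.injective this)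
    have h8 := (hcols k).comp F hFinj
    have h9 : ((fun i : {i : Fin n // (T i).2 = k} => v (σ i.1)) ∘ F)
        = fun j : {j : Fin n // (T (σ⁻¹ j)).2 = k} => v j.1 := by
      funext j
      show v (σ (σ⁻¹ j.1)) = v j.1
      exact congrArg v (Equiv.apply_symm_apply σ j.1)
    rw [h9] at h8
    exact h8
  · intro k
    have hmap : (Finset.univ.filter fun j : Fin n => (T (σ⁻¹ j)).2 = k)
        = (Finset.univ.filter fun i : Fin n => (T i).2 = k).map σ.toEmbedding := by
      ext j
      simp only [Finset.mem_filter, Finset.mem_univ, true_and, Finset.mem_map,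
        Equiv.coe_toEmbedding]
      constructor
      · intro hj
        exact ⟨σ⁻¹ j, hj, by simp⟩
      · rintro ⟨i, hi, rfl⟩
        simpa using hi
    rw [hmap, Finset.card_map]
    exact card_col n lam hl k
end
end

section
/- Let T be a Young tableau with n boxes filled bijectively with 1, …, n, let b_T = Σ_{σ ∈ Col(T)} sign(σ) σ be its column antisymmetrizer, and let v_1, …, v_n be vectors in a complex vector space V. Then (v_1 ⊗ ⋯ ⊗ v_n) b_T ≠ 0 if and only if, for each column of T, the set of vectors {v_i : i lies in that column} is linearly independent. -/
/-!
Common definitions: the right action of `Sₙ` on `V^{⊗n}` by permuting tensor positions,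
the diagonal action of `End(V)` (hence `GL(V)`), the span `G(w)` of a `GL(V)`-orbit,
Young symmetrizers, the irreducible character `χ^λ` of `Sₙ`, the symmetrizer `T_λ`,
Gamas's condition, highest weight vectors ("λ appears in M"), the rank partition and
dominance order.
-/

open scoped TensorProduct
open Finset

noncomputable section

section Aux

open Gamas

variable (n : ℕ) (V : Type*) [AddCommGroup V] [Module ℂ V]

lemma permAct_tprod (σ : Equiv.Perm (Fin n)) (v : Fin n → V) :
    permAct n V σ (PiTensorProduct.tprod ℂ v) =
      PiTensorProduct.tprod ℂ (fun i => v (σ i)) := by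
  simp [permAct, PiTensorProduct.lift.tprod]

lemma bOp_tprod' (T : Fin n → ℕ × ℕ) (v : Fin n → V) :
    bOp n V T (PiTensorProduct.tprod ℂ v) =
      ∑ σ ∈ colGroup n T,
        ((Equiv.Perm.sign σ : ℤ) : ℂ) • PiTensorProduct.tprod ℂ (fun i => v (σ i)) := by
  simp [bOp, LinearMap.sum_apply, permAct_tprod]

lemma exists_dual {ι : Type*} [DecidableEq ι] {w : ι → V} (h : LinearIndependent ℂ w) :
    ∃ g : ι → V →ₗ[ℂ] ℂ, ∀ i j, g i (w j) = if i = j then 1 else 0 := by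
  set p := Submodule.span ℂ (Set.range w) with hp
  obtain ⟨q, hq⟩ := Submodule.exists_isCompl p
  let B := Module.Basis.span h
  refine ⟨fun i => (B.coord i).comp (Submodule.linearProjOfIsCompl p q hq), fun i j => ?_⟩
  have h1 : Submodule.linearProjOfIsCompl p q hq (w j) = B j := by
    have h2 := Submodule.linearProjOfIsCompl_apply_left hq (B j)
    rwa [show ((B j : p) : V) = w j from congrArg Subtype.val (Module.Basis.span_apply h j)] at h2
  simp only [LinearMap.comp_apply, h1, Module.Basis.coord_apply, Module.Basis.repr_self,
    Finsupp.single_apply]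
  simp [eq_comm]

end Aux

section Main

open Gamas

variable (n : ℕ) (V : Type*) [AddCommGroup V] [Module ℂ V]

lemma w_update (T : Fin n → ℕ × ℕ) (v : Fin n → V) (c : ℕ)
    [inst : DecidableEq {i : Fin n // (T i).2 = c}]
    (u : {i : Fin n // (T i).2 = c} → V) (j : {i : Fin n // (T i).2 = c}) (x : V) :
    (fun i => if h : (T i).2 = c then Function.update u j x ⟨i, h⟩ else v i) =
      Function.update (fun i => if h : (T i).2 = c then u ⟨i, h⟩ else v i) (j : Fin n) x := by
  funext i
  by_cases hi : (T i).2 = c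
  · rw [dif_pos hi, Function.update_apply, Function.update_apply]
    by_cases hij : i = (j : Fin n)
    · rw [if_pos hij, if_pos (Subtype.ext hij)]
    · rw [if_neg hij, if_neg (fun h => hij (congrArg Subtype.val h)), dif_pos hi]
  · have hij : i ≠ (j : Fin n) := fun h => hi (h ▸ j.2)
    rw [dif_neg hi, Function.update_apply, if_neg hij, dif_neg hi]

lemma bOp_tprod_eq_zero (T : Fin n → ℕ × ℕ) (v : Fin n → V) (c : ℕ)
    (hdep : ¬ LinearIndependent ℂ (fun i : {i : Fin n // (T i).2 = c} => v i)) :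
    bOp n V T (PiTensorProduct.tprod ℂ v) = 0 := by
  classical
  set S := {i : Fin n // (T i).2 = c} with hS
  let w : (S → V) → Fin n → V := fun u i => if h : (T i).2 = c then u ⟨i, h⟩ else v i
  let F : MultilinearMap ℂ (fun _ : S => V) (TP n V) :=
    { toFun := fun u => bOp n V T (PiTensorProduct.tprod ℂ (w u))
      map_update_add' := by
        intro inst u j x y
        show bOp n V T (PiTensorProduct.tprod ℂ (w (Function.update u j (x + y)))) = _
        simp only [w, w_update n V T v c]
        rw [MultilinearMap.map_update_add, map_add]
      map_update_smul' := by
        intro inst u j a x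
        show bOp n V T (PiTensorProduct.tprod ℂ (w (Function.update u j (a • x)))) = _
        simp only [w, w_update n V T v c]
        rw [MultilinearMap.map_update_smul, map_smul] }
  let A : V [⋀^S]→ₗ[ℂ] TP n V :=
    { F with
      map_eq_zero_of_eq' := by
        intro u j k hjk hne
        show bOp n V T (PiTensorProduct.tprod ℂ (w u)) = 0
        rw [bOp_tprod']
        set τ : Equiv.Perm (Fin n) := Equiv.swap (j : Fin n) (k : Fin n) with hτ
        have hjkv : (j : Fin n) ≠ (k : Fin n) := fun h => hne (Subtype.ext h)
        have hfix : ∀ m, w u (τ m) = w u m := by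
          intro m
          rcases eq_or_ne m (j : Fin n) with hm | hm
          · subst hm
            rw [hτ, Equiv.swap_apply_left]
            show w u (k : Fin n) = w u (j : Fin n)
            simp only [w, dif_pos j.2, dif_pos k.2]
            rw [show (⟨(k : Fin n), k.2⟩ : S) = k from rfl,
              show (⟨(j : Fin n), j.2⟩ : S) = j from rfl, hjk]
          · rcases eq_or_ne m (k : Fin n) with hm' | hm'
            · subst hm'
              rw [hτ, Equiv.swap_apply_right]
              show w u (j : Fin n) = w u (k : Fin n)
              simp only [w, dif_pos j.2, dif_pos k.2]
              rw [show (⟨(k : Fin n), k.2⟩ : S) = k from rfl,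
                show (⟨(j : Fin n), j.2⟩ : S) = j from rfl, hjk]
            · rw [hτ, Equiv.swap_apply_of_ne_of_ne hm hm']
        have hτcol : ∀ m, (T (τ m)).2 = (T m).2 := by
          intro m
          rcases eq_or_ne m (j : Fin n) with hm | hm
          · subst hm; rw [hτ, Equiv.swap_apply_left, k.2, j.2]
          · rcases eq_or_ne m (k : Fin n) with hm' | hm'
            · subst hm'; rw [hτ, Equiv.swap_apply_right, k.2, j.2]
            · rw [hτ, Equiv.swap_apply_of_ne_of_ne hm hm']
        refine Finset.sum_involution (fun σ _ => τ * σ) ?_ ?_ ?_ ?_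
        · intro σ hσ
          have h1 : (fun i => w u ((τ * σ) i)) = fun i => w u (σ i) := by
            funext i; rw [Equiv.Perm.mul_apply, hfix]
          rw [h1]
          have h2 : Equiv.Perm.sign (τ * σ) = - Equiv.Perm.sign σ := by
            rw [map_mul, hτ, Equiv.Perm.sign_swap hjkv, neg_one_mul]
          rw [h2]
          push_cast
          rw [neg_smul, add_neg_cancel]
        · intro σ _ _ h
          have h1 : τ * σ = σ := h
          rw [hτ, Equiv.swap_mul_eq_iff] at h1
          exact hjkv h1
        · intro σ hσ
          simp only [colGroup, Finset.mem_filter, Finset.mem_univ, true_and] at hσ ⊢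
          intro i
          rw [Equiv.Perm.mul_apply, hτcol, hσ]
        · intro σ _
          show τ * (τ * σ) = σ
          rw [← mul_assoc, hτ, Equiv.swap_mul_self, one_mul] }
  have hA : A (fun i : S => v i) = bOp n V T (PiTensorProduct.tprod ℂ v) := by
    show bOp n V T (PiTensorProduct.tprod ℂ (w (fun i : S => v i))) = _
    congr 1
    apply congrArg
    funext i
    by_cases hi : (T i).2 = c
    · exact dif_pos hi
    · exact dif_neg hi
  rw [← hA]
  exact A.map_linearDependent _ hdep

end Main

section Pos

open Gamas

variable (n : ℕ) (V : Type*) [AddCommGroup V] [Module ℂ V]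

lemma one_mem_colGroup (T : Fin n → ℕ × ℕ) : (1 : Equiv.Perm (Fin n)) ∈ colGroup n T := by
  simp [colGroup]

lemma bOp_tprod_ne_zero (T : Fin n → ℕ × ℕ) (v : Fin n → V)
    (h : ∀ c : ℕ, LinearIndependent ℂ (fun i : {i : Fin n // (T i).2 = c} => v i)) :
    bOp n V T (PiTensorProduct.tprod ℂ v) ≠ 0 := by
  classical
  choose g hg using fun c => exists_dual V (h c)
  let f : Fin n → V →ₗ[ℂ] ℂ := fun i => g (T i).2 ⟨i, rfl⟩
  let Φ : TP n V →ₗ[ℂ] ℂ :=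
    PiTensorProduct.lift ((MultilinearMap.mkPiAlgebra ℂ (Fin n) ℂ).compLinearMap f)
  have key : Φ (bOp n V T (PiTensorProduct.tprod ℂ v)) = 1 := by
    rw [bOp_tprod', map_sum]
    have hterm : ∀ σ ∈ colGroup n T,
        Φ (((Equiv.Perm.sign σ : ℤ) : ℂ) • PiTensorProduct.tprod ℂ (fun i => v (σ i))) =
          ((Equiv.Perm.sign σ : ℤ) : ℂ) * ∏ i, (if i = σ i then (1 : ℂ) else 0) := by
      intro σ hσ
      rw [map_smul, smul_eq_mul]
      congr 1
      rw [show Φ (PiTensorProduct.tprod ℂ (fun i => v (σ i))) = ∏ i, f i (v (σ i)) by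
        simp [Φ, PiTensorProduct.lift.tprod]]
      apply Finset.prod_congr rfl
      intro i _
      simp only [colGroup, Finset.mem_filter, Finset.mem_univ, true_and] at hσ
      have hcol : (T (σ i)).2 = (T i).2 := hσ i
      have := hg (T i).2 ⟨i, rfl⟩ ⟨σ i, hcol⟩
      simp only [f]
      rw [show v (σ i) = (fun j : {j : Fin n // (T j).2 = (T i).2} => v (j : Fin n))
        ⟨σ i, hcol⟩ from rfl, this]
      simp [Subtype.ext_iff]
    rw [Finset.sum_congr rfl hterm]
    rw [Finset.sum_eq_single 1]
    · simp
    · intro σ hσ hσ1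
      have : ∃ i, σ i ≠ i := by
        by_contra hc
        push_neg at hc
        exact hσ1 (Equiv.ext hc)
      obtain ⟨i, hi⟩ := this
      have hz : (∏ i, (if i = σ i then (1 : ℂ) else 0)) = 0 :=
        Finset.prod_eq_zero (Finset.mem_univ i) (if_neg (fun h' => hi h'.symm))
      rw [hz, mul_zero]
    · intro habs
      exact absurd (one_mem_colGroup n T) habs
  intro h0
  rw [h0, map_zero] at key
  exact zero_ne_one key

end Pos



open Gamas in
/-- For a Young tableau `T` with `n` boxes, filled bijectively with the tensor positions
(`T` is an injection of `Fin n` onto the cells of a Young diagram `mu` with `n` cells),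
`(v₁ ⊗ ⋯ ⊗ vₙ) b_T ≠ 0` if and only if, for each column `c` of `T`, the family of
vectors `{v i : i lies in column c}` is linearly independent. -/
theorem bOp_tprod_ne_zero_iff (n : ℕ) (V : Type*) [AddCommGroup V] [Module ℂ V]
    (mu : YoungDiagram) (hmu : mu.card = n) (T : Fin n → ℕ × ℕ)
    (hinj : Function.Injective T) (hrange : Set.range T = ↑mu.cells) (v : Fin n → V) :
    bOp n V T (PiTensorProduct.tprod ℂ v) ≠ 0 ↔
      ∀ c : ℕ, LinearIndependent ℂ (fun i : {i : Fin n // (T i).2 = c} => v i) := by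
  constructor
  · intro hne
    by_contra hc
    push_neg at hc
    obtain ⟨c, hdep⟩ := hc
    exact hne (bOp_tprod_eq_zero n V T v c hdep)
  · exact bOp_tprod_ne_zero n V T v
end
end

section
/- Let v_1, …, v_n be vectors spanning a finite-dimensional complex vector space V, and let λ be a partition of n with ℓ(λ) < dim V whose Gamas condition is satisfied by {v_1, …, v_n} (i.e., the multiset {v_i} can be partitioned into linearly independent sets whose sizes are the parts of λᵀ). Then there exists a linear projection A of V onto a subspace W of dimension ℓ(λ) such that the multiset {Av_1, …, Av_n} also satisfies Gamas's condition for λ. -/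
/-!
Common definitions: the right action of `Sₙ` on `V^{⊗n}` by permuting tensor positions,
the diagonal action of `End(V)` (hence `GL(V)`), the span `G(w)` of a `GL(V)`-orbit,
Young symmetrizers, the irreducible character `χ^λ` of `Sₙ`, the symmetrizer `T_λ`,
Gamas's condition, highest weight vectors ("λ appears in M"), the rank partition and
dominance order.
-/

open scoped TensorProduct
open Finset

noncomputable section

/-- Avoidance lemma: given finitely many subspaces of dimension at most `L`, there is a
subspace of any dimension `m` with `m + L ≤ dim V` meeting each of them trivially. -/
lemma gamas_aux_avoid {V : Type*} [AddCommGroup V] [Module ℂ V] [FiniteDimensional ℂ V]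
    {ι : Type*} [Finite ι] (U : ι → Submodule ℂ V) (L : ℕ)
    (hU : ∀ i, Module.finrank ℂ (U i) ≤ L) :
    ∀ m, m + L ≤ Module.finrank ℂ V →
      ∃ K : Submodule ℂ V, Module.finrank ℂ K = m ∧ ∀ i, K ⊓ U i = ⊥ := by
  intro m
  induction m with
  | zero => exact fun _ => ⟨⊥, finrank_bot ℂ V, fun i => bot_inf_eq _⟩
  | succ m ih =>
    intro hm
    obtain ⟨K, hKrank, hKU⟩ := ih (by omega)
    haveI := Fintype.ofFinite ι
    haveI : Finite (Option ι) := Finite.of_fintype _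
    set p : Option ι → Submodule ℂ V := fun o => o.elim K (fun i => K ⊔ U i) with hp
    have hproper : ∀ o, p o ≠ ⊤ := by
      intro o
      have hlt : Module.finrank ℂ (p o) < Module.finrank ℂ V := by
        cases o with
        | none =>
          show Module.finrank ℂ K < _
          omega
        | some i =>
          have h1 := Submodule.finrank_sup_add_finrank_inf_eq K (U i)
          have h2 := hU i
          show Module.finrank ℂ ↥(K ⊔ U i) < _
          omega
      intro htop
      rw [htop, finrank_top] at hlt
      omega
    obtain ⟨x, hx⟩ : ∃ x : V, ∀ o, x ∉ p o := by
      by_contra h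
      push_neg at h
      have hcov : (⋃ o, ((p o : Submodule ℂ V) : Set V)) = Set.univ := by
        ext y
        simp only [Set.mem_iUnion, Set.mem_univ, iff_true, SetLike.mem_coe]
        exact h y
      obtain ⟨o, ho⟩ := Subspace.exists_eq_top_of_iUnion_eq_univ hcov
      exact hproper o ho
    have hxK : x ∉ K := hx none
    have hx0 : x ≠ 0 := fun h => hxK (h ▸ K.zero_mem)
    have hKx : K ⊓ (ℂ ∙ x) = ⊥ := by
      rw [eq_bot_iff]
      rintro y ⟨hyK, hyx⟩
      obtain ⟨t, rfl⟩ := Submodule.mem_span_singleton.mp hyx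
      rcases eq_or_ne t 0 with rfl | ht
      · simp
      · exact absurd (by simpa [ht] using K.smul_mem t⁻¹ hyK) hxK
    refine ⟨K ⊔ (ℂ ∙ x), ?_, ?_⟩
    · have h1 := Submodule.finrank_sup_add_finrank_inf_eq K (ℂ ∙ x)
      rw [hKx] at h1
      have h2 := finrank_span_singleton (K := ℂ) hx0
      simp only [finrank_bot] at h1
      omega
    · intro i
      rw [eq_bot_iff]
      rintro y ⟨hysup, hyU⟩
      obtain ⟨a, haK, b, hbx, rfl⟩ := Submodule.mem_sup.mp hysup
      obtain ⟨t, rfl⟩ := Submodule.mem_span_singleton.mp hbx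
      rcases eq_or_ne t 0 with rfl | ht
      · have : a ∈ K ⊓ U i := ⟨haK, by simpa using hyU⟩
        rw [hKU i] at this
        simpa using this
      · exfalso
        apply hx (some i)
        have h1 : a + t • x - a ∈ K ⊔ U i :=
          Submodule.sub_mem _ (Submodule.mem_sup_right hyU) (Submodule.mem_sup_left haK)
        have h2 : t • x ∈ K ⊔ U i := by simpa using h1
        have h3 := Submodule.smul_mem _ t⁻¹ h2
        rw [smul_smul, inv_mul_cancel₀ ht, one_smul] at h3
        exact h3

open Gamas in
/-- If `v 0, …, v (n-1)` span `V`, `λ` is a partition of `n` with `ℓ(λ) < dim V` and the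
`v i` satisfy Gamas's condition for `λ`, then there is a linear projection `A` of `V`
onto a subspace `W` of dimension `ℓ(λ)` such that `{A v i}` still satisfies Gamas's
condition for `λ`. (Here `ℓ(λ) = colLen 0` is the number of parts of `λ`.) -/
theorem exists_projection_gamas (n : ℕ) (V : Type*) [AddCommGroup V] [Module ℂ V]
    [FiniteDimensional ℂ V] (v : Fin n → V)
    (hspan : Submodule.span ℂ (Set.range v) = ⊤)
    (lam : YoungDiagram) (hl : lam.card = n)
    (hlen : lam.colLen 0 < Module.finrank ℂ V)
    (hg : GamasCondition n V v lam) :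
    ∃ (W : Submodule ℂ V) (A : Module.End ℂ V),
      A ∘ₗ A = A ∧ LinearMap.range A = W ∧ Module.finrank ℂ W = lam.colLen 0 ∧
      GamasCondition n V (fun i => A (v i)) lam := by
  classical
  obtain ⟨c, hLI, hcard⟩ := hg
  set L := lam.colLen 0 with hL
  -- the span of each Gamas block has dimension at most `L`
  set U : Fin n → Submodule ℂ V := fun i =>
    Submodule.span ℂ (((Finset.univ.filter fun j => c j = c i).image v : Finset V) : Set V)
    with hUdef
  have hUle : ∀ i, Module.finrank ℂ (U i) ≤ L := by
    intro i
    calc Module.finrank ℂ (U i)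
        ≤ ((Finset.univ.filter fun j => c j = c i).image v).card :=
          finrank_span_finset_le_card _
      _ ≤ (Finset.univ.filter fun j => c j = c i).card := Finset.card_image_le
      _ = lam.transpose.rowLen (c i) := hcard (c i)
      _ = lam.colLen (c i) := lam.rowLen_transpose (c i)
      _ ≤ L := lam.colLen_anti 0 (c i) (Nat.zero_le _)
  obtain ⟨K, hKrank, hKU⟩ :=
    gamas_aux_avoid U L hUle (Module.finrank ℂ V - L) (by omega)
  obtain ⟨W, hW⟩ := K.exists_isCompl
  have hWrank : Module.finrank ℂ W = L := by
    have := Submodule.finrank_add_eq_of_isCompl hW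
    omega
  set A : Module.End ℂ V := W.subtype ∘ₗ W.linearProjOfIsCompl K hW.symm with hA
  have hAW : ∀ x : V, A x ∈ W := fun x => (W.linearProjOfIsCompl K hW.symm x).2
  have hAid : ∀ x ∈ W, A x = x := by
    intro x hx
    have h1 : W.linearProjOfIsCompl K hW.symm x = ⟨x, hx⟩ :=
      Submodule.linearProjOfIsCompl_apply_left hW.symm ⟨x, hx⟩
    simp [hA, h1]
  have hker : LinearMap.ker A = K := by
    ext x
    constructor
    · intro hx
      have h1 : (W.linearProjOfIsCompl K hW.symm x : V) = 0 := hx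
      have h2 : W.linearProjOfIsCompl K hW.symm x = 0 := Subtype.ext h1
      have := Submodule.linearProjOfIsCompl_ker (p := W) (q := K) hW.symm
      rw [← this]
      exact h2
    · intro hx
      have h2 : W.linearProjOfIsCompl K hW.symm x = 0 :=
        Submodule.linearProjOfIsCompl_apply_right' hW.symm hx
      show (W.linearProjOfIsCompl K hW.symm x : V) = 0
      rw [h2]; rfl
  refine ⟨W, A, ?_, ?_, hWrank, ?_⟩
  · ext x
    exact hAid (A x) (hAW x)
  · apply le_antisymm
    · rintro y ⟨x, rfl⟩
      exact hAW x
    · intro y hy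
      exact ⟨y, hAid y hy⟩
  · refine ⟨c, ?_, hcard⟩
    intro k
    by_cases hk : ∃ i0 : Fin n, c i0 = k
    · obtain ⟨i0, hi0⟩ := hk
      have hsub : Submodule.span ℂ (Set.range fun i : {i : Fin n // c i = k} => v i) ≤ U i0 := by
        apply Submodule.span_le.mpr
        rintro _ ⟨⟨i, hi⟩, rfl⟩
        apply Submodule.subset_span
        simp only [Finset.coe_image, Set.mem_image, Finset.mem_coe, Finset.mem_filter]
        exact ⟨i, by simp [hi, hi0], rfl⟩
      have hdisj : Disjoint (Submodule.span ℂ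
          (Set.range fun i : {i : Fin n // c i = k} => v i)) (LinearMap.ker A) := by
        rw [hker]
        have h1 : Disjoint (U i0) K := by
          rw [disjoint_comm, disjoint_iff]
          exact hKU i0
        exact h1.mono_left hsub
      exact (hLI k).map hdisj
    · have : IsEmpty {i : Fin n // c i = k} := ⟨fun ⟨i, hi⟩ => hk ⟨i, hi⟩⟩
      exact linearIndependent_empty_type
end
end

section
/- Let V be a complex vector space of dimension k, let v_1, …, v_k be a basis of V, and let v_{k+1}, …, v_n ∈ V. Let B = {1, …, k} and b_B = Σ_{σ ∈ S_B} sign(σ) σ ∈ ℂS_n, acting on tensor positions of V^{⊗n}. Then the GL(V)-module G((v_1 ⊗ ⋯ ⊗ v_n) b_B) is isomorphic to det_V ⊗ G(v_{k+1} ⊗ ⋯ ⊗ v_n), where det_V is the one-dimensional representation g ↦ det(g) of GL(V). -/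
/-!
Common definitions: the right action of `Sₙ` on `V^{⊗n}` by permuting tensor positions,
the diagonal action of `End(V)` (hence `GL(V)`), the span `G(w)` of a `GL(V)`-orbit,
Young symmetrizers, the irreducible character `χ^λ` of `Sₙ`, the symmetrizer `T_λ`,
Gamas's condition, highest weight vectors ("λ appears in M"), the rank partition and
dominance order.
-/

open scoped TensorProduct
open Finset

noncomputable section

noncomputable section
namespace GamasProof
open Gamas PiTensorProduct

variable {V : Type*} [AddCommGroup V] [Module ℂ V]

lemma permAct_tprod {n : ℕ} (σ : Equiv.Perm (Fin n)) (w : Fin n → V) :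
    permAct n V σ (tprod ℂ w) = tprod ℂ (fun i => w (σ i)) := by
  simp [permAct, PiTensorProduct.lift.tprod]

lemma glAct_tprod {n : ℕ} (A : Module.End ℂ V) (w : Fin n → V) :
    glAct n V A (tprod ℂ w) = tprod ℂ (fun i => A (w i)) := by
  simp [glAct]

def eqSum (n k : ℕ) (hk : k ≤ n) : (Fin k ⊕ Fin (n - k)) ≃ Fin n :=
  finSumFinEquiv.trans (finCongr (by omega))

variable (V) in
def Phi (n k : ℕ) (hk : k ≤ n) :
    ((⨂[ℂ] _ : Fin k, V) ⊗[ℂ] TP (n - k) V) ≃ₗ[ℂ] TP n V :=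
  (PiTensorProduct.tmulEquiv ℂ V).trans
    (PiTensorProduct.reindex ℂ (fun _ : Fin k ⊕ Fin (n - k) => V) (eqSum n k hk))

def glue (n k : ℕ) (hk : k ≤ n) (a : Fin k → V) (c : Fin (n - k) → V) : Fin n → V :=
  fun i => Sum.elim a c ((eqSum n k hk).symm i)

lemma Phi_tprod (n k : ℕ) (hk : k ≤ n) (a : Fin k → V) (c : Fin (n - k) → V) :
    Phi V n k hk (tprod ℂ a ⊗ₜ[ℂ] tprod ℂ c) = tprod ℂ (glue n k hk a c) := by
  simp only [Phi, LinearEquiv.trans_apply, PiTensorProduct.tmulEquiv_apply,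
    PiTensorProduct.reindex_tprod]
  rfl

lemma eqSum_inl (n k : ℕ) (hk : k ≤ n) (x : Fin k) :
    ((eqSum n k hk (Sum.inl x)) : ℕ) = (x : ℕ) := by
  simp [eqSum]

lemma eqSum_inr (n k : ℕ) (hk : k ≤ n) (x : Fin (n - k)) :
    ((eqSum n k hk (Sum.inr x)) : ℕ) = k + (x : ℕ) := by
  simp [eqSum]

lemma glue_apply_lt (n k : ℕ) (hk : k ≤ n) (a : Fin k → V) (c : Fin (n - k) → V)
    (i : Fin n) (h : (i : ℕ) < k) : glue n k hk a c i = a ⟨i, h⟩ := by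
  have : i = eqSum n k hk (Sum.inl ⟨(i : ℕ), h⟩) := by
    apply Fin.ext; rw [eqSum_inl]
  conv_lhs => rw [this]
  simp [glue]

lemma glue_apply_ge (n k : ℕ) (hk : k ≤ n) (a : Fin k → V) (c : Fin (n - k) → V)
    (i : Fin n) (h : ¬ (i : ℕ) < k) :
    glue n k hk a c i = c ⟨(i : ℕ) - k, by omega⟩ := by
  have : i = eqSum n k hk (Sum.inr ⟨(i : ℕ) - k, by omega⟩) := by
    apply Fin.ext; rw [eqSum_inr]
    exact (Nat.add_sub_cancel' (Nat.le_of_not_lt h)).symm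
  conv_lhs => rw [this]
  simp [glue]

lemma glue_comp (n k : ℕ) (hk : k ≤ n) (g : Module.End ℂ V) (a : Fin k → V)
    (c : Fin (n - k) → V) :
    (fun i => g (glue n k hk a c i)) =
      glue n k hk (fun x => g (a x)) (fun y => g (c y)) := by
  funext i
  by_cases h : (i : ℕ) < k
  · rw [glue_apply_lt n k hk a c i h, glue_apply_lt n k hk _ _ i h]
  · rw [glue_apply_ge n k hk a c i h, glue_apply_ge n k hk _ _ i h]

end GamasProof
namespace GamasProof
open Gamas PiTensorProduct

variable {V : Type*} [AddCommGroup V] [Module ℂ V]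

/-- The antisymmetrizer `(w₁, …, w_k) ↦ Σ_σ sign σ • w_{σ 1} ⊗ ⋯ ⊗ w_{σ k}` as an
alternating map. -/
def altF (k : ℕ) : V [⋀^Fin k]→ₗ[ℂ] (⨂[ℂ] _ : Fin k, V) :=
  MultilinearMap.alternatization (PiTensorProduct.tprod ℂ)

lemma altF_apply (k : ℕ) (a : Fin k → V) :
    altF k a = ∑ σ : Equiv.Perm (Fin k),
      ((Equiv.Perm.sign σ : ℤ) : ℂ) • tprod ℂ (fun i => a (σ i)) := by
  rw [altF, MultilinearMap.alternatization_apply]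
  refine Finset.sum_congr rfl fun σ _ => ?_
  rw [MultilinearMap.domDomCongr_apply, Units.smul_def, ← Int.cast_smul_eq_zsmul ℂ]

lemma altF_comp (k : ℕ) (b : Module.Basis (Fin k) ℂ V) (g : Module.End ℂ V) :
    altF k (fun i => g (b i)) = LinearMap.det g • altF k ⇑b := by
  have key : (altF k : V [⋀^Fin k]→ₗ[ℂ] _) =
      (LinearMap.toSpanSingleton ℂ _ (altF k ⇑b)).compAlternatingMap b.det := by
    apply Module.Basis.ext_alternating b
    intro vf hvf
    have hbij : Function.Bijective vf := (Finite.injective_iff_bijective).mp hvf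
    set σ : Equiv.Perm (Fin k) := Equiv.ofBijective vf hbij with hσ
    have hv : (fun i => b (vf i)) = ⇑b ∘ ⇑σ := rfl
    rw [hv, AlternatingMap.map_perm, LinearMap.compAlternatingMap_apply,
      AlternatingMap.map_perm, Module.Basis.det_self, LinearMap.toSpanSingleton_apply]
    rcases Int.units_eq_one_or (Equiv.Perm.sign σ) with h | h <;> simp [h]
  have h1 : altF k (fun i => g (b i)) = b.det (fun i => g (b i)) • altF k ⇑b := by
    rw [key, LinearMap.compAlternatingMap_apply, LinearMap.toSpanSingleton_apply,
      LinearMap.compAlternatingMap_apply, LinearMap.toSpanSingleton_apply,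
      Module.Basis.det_self, one_smul]
  rw [h1]
  have h2 : (fun i => g (b i)) = ⇑g ∘ ⇑b := rfl
  rw [h2, Module.Basis.det_comp, Module.Basis.det_self, mul_one]

lemma altF_ne_zero (k : ℕ) (b : Module.Basis (Fin k) ℂ V) : altF k ⇑b ≠ 0 := by
  intro h
  have hψ : PiTensorProduct.lift (b.det.toMultilinearMap) (altF k ⇑b) = (k.factorial : ℂ) := by
    rw [altF_apply, map_sum]
    have : ∀ σ : Equiv.Perm (Fin k),
        PiTensorProduct.lift (b.det.toMultilinearMap)
          (((Equiv.Perm.sign σ : ℤ) : ℂ) • tprod ℂ (fun i => b (σ i))) = 1 := by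
      intro σ
      rw [map_smul, PiTensorProduct.lift.tprod]
      have : b.det.toMultilinearMap (fun i => b (σ i)) = b.det (⇑b ∘ ⇑σ) := rfl
      rw [this, AlternatingMap.map_perm, Module.Basis.det_self]
      rcases Int.units_eq_one_or (Equiv.Perm.sign σ) with h | h <;> simp [h]
    rw [Finset.sum_congr rfl fun σ _ => this σ]
    simp [Finset.card_univ, Fintype.card_perm]
  rw [h, map_zero] at hψ
  exact Nat.cast_ne_zero.mpr k.factorial_ne_zero hψ.symm

end GamasProof
namespace GamasProof
open Gamas PiTensorProduct

variable {V : Type*} [AddCommGroup V] [Module ℂ V]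

def emb (n k : ℕ) (hk : k ≤ n) : Fin k ≃ {i : Fin n // (i : ℕ) < k} where
  toFun x := ⟨⟨(x : ℕ), lt_of_lt_of_le x.2 hk⟩, x.2⟩
  invFun j := ⟨(j.1 : ℕ), j.2⟩
  left_inv x := rfl
  right_inv j := rfl

lemma bBOp_tprod (n k : ℕ) (hk : k ≤ n) (v : Fin n → V) :
    bBOp n V k (tprod ℂ v) =
      ∑ τ : Equiv.Perm (Fin k), ((Equiv.Perm.sign τ : ℤ) : ℂ) •
        tprod ℂ (glue n k hk (fun i => v (Fin.castLE hk (τ i)))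
          (fun j : Fin (n - k) => v ⟨k + (j : ℕ), by have := j.isLt; omega⟩)) := by
  classical
  have hfix : ∀ (σ : Equiv.Perm (Fin n)), (∀ i, σ i ≠ i → (i : ℕ) < k) →
      ∀ x : Fin n, ¬ (x : ℕ) < k → σ x = x := by
    intro σ hσ x hx
    by_contra hne
    exact hx (hσ x hne)
  have hp : ∀ (σ : Equiv.Perm (Fin n)), (∀ i, σ i ≠ i → (i : ℕ) < k) →
      ∀ x : Fin n, ((x : ℕ) < k ↔ ((σ x : Fin n) : ℕ) < k) := by
    intro σ hσ x
    constructor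
    · intro hx
      by_contra hs
      have h1 := σ.injective (hfix σ hσ (σ x) hs)
      rw [h1] at hs
      exact hs hx
    · intro hs
      by_contra hx
      rw [hfix σ hσ x hx] at hs
      exact hx hs
  have hmem : ∀ σ : Equiv.Perm (Fin n),
      σ ∈ Finset.univ.filter (fun σ : Equiv.Perm (Fin n) => ∀ i, σ i ≠ i → (i : ℕ) < k)
        → ∀ i, σ i ≠ i → (i : ℕ) < k := by
    intro σ hσ
    exact (Finset.mem_filter.mp hσ).2
  have hext : ∀ (σ : Equiv.Perm (Fin n)) (hσ : ∀ i, σ i ≠ i → (i : ℕ) < k),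
      (((emb n k hk).permCongr.symm (σ.subtypePerm (fun x => (hp σ hσ x).symm))).extendDomain (emb n k hk)) = σ := by
    intro σ hσ
    apply Equiv.ext
    intro x
    by_cases hx : (x : ℕ) < k
    · rw [Equiv.Perm.extendDomain_apply_subtype _ (emb n k hk) hx]
      apply Fin.ext
      simp [Equiv.permCongr_symm_apply, Equiv.Perm.subtypePerm_apply, emb]
    · rw [Equiv.Perm.extendDomain_apply_not_subtype _ (emb n k hk) hx, hfix σ hσ x hx]
  rw [bBOp, LinearMap.sum_apply]
  simp only [LinearMap.smul_apply]
  refine Finset.sum_bij'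
    (fun σ hσ => (emb n k hk).permCongr.symm (σ.subtypePerm (fun x => (hp σ (hmem σ hσ) x).symm)))
    (fun τ _ => τ.extendDomain (emb n k hk)) ?_ ?_ ?_ ?_ ?_
  · intro σ hσ
    exact Finset.mem_univ _
  · intro τ _
    rw [Finset.mem_filter]
    refine ⟨Finset.mem_univ _, fun i hi => ?_⟩
    by_contra hik
    exact hi (Equiv.Perm.extendDomain_apply_not_subtype _ (emb n k hk) hik)
  · intro σ hσ
    exact hext σ (hmem σ hσ)
  · intro τ hτ
    apply Equiv.Perm.extendDomainHom_injective (emb n k hk)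
    show (_ : Equiv.Perm (Fin n)) = _
    simp only [Equiv.Perm.extendDomainHom_apply]
    exact hext (τ.extendDomain (emb n k hk)) (hmem _ (by
      rw [Finset.mem_filter]
      refine ⟨Finset.mem_univ _, fun i hi => ?_⟩
      by_contra hik
      exact hi (Equiv.Perm.extendDomain_apply_not_subtype _ (emb n k hk) hik)))
  · intro σ hσ
    set τ := (emb n k hk).permCongr.symm (σ.subtypePerm (fun x => (hp σ (hmem σ hσ) x).symm)) with hτdef
    have hστ : σ = τ.extendDomain (emb n k hk) := (hext σ (hmem σ hσ)).symm
    have hsign : Equiv.Perm.sign σ = Equiv.Perm.sign τ := by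
      rw [hστ, Equiv.Perm.sign_extendDomain]
    have hfun : (fun i => v (σ i)) =
        glue n k hk (fun i => v (Fin.castLE hk (τ i)))
          (fun j : Fin (n - k) => v ⟨k + (j : ℕ), by have := j.isLt; omega⟩) := by
      funext x
      by_cases hx : (x : ℕ) < k
      · rw [glue_apply_lt n k hk _ _ x hx]
        rw [hστ, Equiv.Perm.extendDomain_apply_subtype _ (emb n k hk) hx]
        apply congrArg v
        apply Fin.ext
        simp [emb, Fin.castLE]
      · rw [glue_apply_ge n k hk _ _ x hx, hfix σ (hmem σ hσ) x hx]
        apply congrArg v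
        apply Fin.ext
        simp only []
        omega
    rw [permAct_tprod, hsign, hfun]
end GamasProof
namespace GamasProof
open Gamas PiTensorProduct

variable {V : Type*} [AddCommGroup V] [Module ℂ V]

lemma Phi_altF (n k : ℕ) (hk : k ≤ n) (a : Fin k → V) (c : Fin (n - k) → V) :
    Phi V n k hk ((altF k a) ⊗ₜ[ℂ] tprod ℂ c) =
      ∑ σ : Equiv.Perm (Fin k), ((Equiv.Perm.sign σ : ℤ) : ℂ) •
        tprod ℂ (glue n k hk (fun i => a (σ i)) c) := by
  rw [altF_apply, TensorProduct.sum_tmul, map_sum]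
  refine Finset.sum_congr rfl fun σ _ => ?_
  rw [← TensorProduct.smul_tmul', map_smul, Phi_tprod]

set_option maxHeartbeats 1000000 in
lemma glAct_comp_L (n k : ℕ) (hk : k ≤ n) (b : Module.Basis (Fin k) ℂ V) (g : Module.End ℂ V) :
    glAct n V g ∘ₗ ((Phi V n k hk).toLinearMap ∘ₗ
        TensorProduct.mk ℂ (⨂[ℂ] _ : Fin k, V) (TP (n - k) V) (altF k ⇑b)) =
      LinearMap.det g • (((Phi V n k hk).toLinearMap ∘ₗ
        TensorProduct.mk ℂ (⨂[ℂ] _ : Fin k, V) (TP (n - k) V) (altF k ⇑b)) ∘ₗ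
          glAct (n - k) V g) := by
  apply PiTensorProduct.ext
  apply MultilinearMap.ext
  intro c
  simp only [LinearMap.compMultilinearMap_apply, LinearMap.comp_apply, LinearMap.smul_apply,
    LinearEquiv.coe_coe, TensorProduct.mk_apply]
  rw [glAct_tprod, Phi_altF, Phi_altF, map_sum]
  rw [Finset.sum_congr rfl (fun σ _ => by
    rw [map_smul, glAct_tprod, glue_comp] :
      ∀ σ ∈ (Finset.univ : Finset (Equiv.Perm (Fin k))), _ = _)]
  rw [← Phi_altF n k hk (fun i => g (b i)) (fun y => g (c y)), altF_comp,
    ← TensorProduct.smul_tmul', map_smul, Phi_altF]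

end GamasProof

open Gamas GamasProof PiTensorProduct in
set_option maxHeartbeats 1000000 in
/-- Let `V` have dimension `k`, let `v 0, …, v (k-1)` be a basis of `V` and
`v k, …, v (n-1)` further vectors. With `B = {0, …, k-1}` and
`b_B = Σ_{σ ∈ S_B} sign(σ) σ`, the `GL(V)`-module `G((v₁ ⊗ ⋯ ⊗ vₙ) b_B)` is isomorphic
to `det_V ⊗ G(v_{k+1} ⊗ ⋯ ⊗ vₙ)`: there is a linear equivalence intertwining the action
of each `g ∈ GL(V)` on the source with `det(g)` times its action on the target. -/
theorem orbitSpan_bB_iso_det_twist (n k : ℕ) (hk : k ≤ n) (V : Type*) [AddCommGroup V]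
    [Module ℂ V] [FiniteDimensional ℂ V] (hdim : Module.finrank ℂ V = k)
    (v : Fin n → V)
    (hindep : LinearIndependent ℂ (fun i : Fin k => v (Fin.castLE hk i)))
    (hspan : Submodule.span ℂ (Set.range fun i : Fin k => v (Fin.castLE hk i)) = ⊤) :
    ∃ e : ↥(orbitSpan n V (bBOp n V k (PiTensorProduct.tprod ℂ v))) ≃ₗ[ℂ]
        ↥(orbitSpan (n - k) V (PiTensorProduct.tprod ℂ
            (fun j : Fin (n - k) => v ⟨k + (j : ℕ), by have := j.isLt; omega⟩))),
      ∀ (g : (Module.End ℂ V)ˣ)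
        (x : ↥(orbitSpan n V (bBOp n V k (PiTensorProduct.tprod ℂ v))))
        (hgx : glAct n V (g : Module.End ℂ V) (x : TP n V) ∈
          orbitSpan n V (bBOp n V k (PiTensorProduct.tprod ℂ v))),
        (e ⟨glAct n V (g : Module.End ℂ V) (x : TP n V), hgx⟩ : TP (n - k) V) =
          LinearMap.det (g : Module.End ℂ V) •
            glAct (n - k) V (g : Module.End ℂ V) (e x : TP (n - k) V) := by
  classical
  let b : Module.Basis (Fin k) ℂ V := Module.Basis.mk hindep (by rw [hspan])
  have hb : ⇑b = fun i : Fin k => v (Fin.castLE hk i) := Module.Basis.coe_mk _ _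
  set w₀ : TP (n - k) V := tprod ℂ
    (fun j : Fin (n - k) => v ⟨k + (j : ℕ), by have := j.isLt; omega⟩) with hw₀
  let ω : ⨂[ℂ] _ : Fin k, V := altF k ⇑b
  let L : TP (n - k) V →ₗ[ℂ] TP n V :=
    (Phi V n k hk).toLinearMap ∘ₗ (TensorProduct.mk ℂ _ _ ω)
  have hL_def : ∀ x : TP (n - k) V, L x = Phi V n k hk (ω ⊗ₜ[ℂ] x) := fun x => by
    simp only [L, LinearMap.comp_apply, LinearEquiv.coe_coe, TensorProduct.mk_apply]
  have hL_tprod : ∀ c : Fin (n - k) → V, L (tprod ℂ c) =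
      ∑ σ : Equiv.Perm (Fin k), ((Equiv.Perm.sign σ : ℤ) : ℂ) •
        tprod ℂ (glue n k hk (fun i => b (σ i)) c) := by
    intro c
    rw [hL_def, Phi_altF]
  have hcomm : ∀ (g : Module.End ℂ V) (x : TP (n - k) V),
      glAct n V g (L x) = LinearMap.det g • L (glAct (n - k) V g x) := by
    intro g x
    have h := LinearMap.congr_fun (glAct_comp_L n k hk b g) x
    simp only [LinearMap.comp_apply, LinearMap.smul_apply] at h
    exact h
  have hLinj : Function.Injective L := by
    have h1 : Function.Injective (LinearMap.toSpanSingleton ℂ (⨂[ℂ] _ : Fin k, V) ω) := by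
      rw [← LinearMap.ker_eq_bot]
      exact LinearMap.ker_toSpanSingleton (R := ℂ) (altF_ne_zero k b)
    have h2 : Function.Injective
        (LinearMap.rTensor (TP (n - k) V)
          (LinearMap.toSpanSingleton ℂ (⨂[ℂ] _ : Fin k, V) ω)) :=
      Module.Flat.rTensor_preserves_injective_linearMap _ h1
    have hfun : ⇑L = ⇑(Phi V n k hk) ∘
        ⇑(LinearMap.rTensor (TP (n - k) V) (LinearMap.toSpanSingleton ℂ (⨂[ℂ] _ : Fin k, V) ω)) ∘
        ⇑(TensorProduct.lid ℂ (TP (n - k) V)).symm := by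
      funext z
      simp [hL_def, TensorProduct.lid_symm_apply, LinearMap.rTensor_tmul,
        LinearMap.toSpanSingleton_apply]
    rw [hfun]
    exact (Phi V n k hk).injective.comp (h2.comp (TensorProduct.lid ℂ _).symm.injective)
  have hBB : bBOp n V k (tprod ℂ v) = L w₀ := by
    rw [hw₀, bBOp_tprod n k hk v, hL_tprod]
    refine Finset.sum_congr rfl fun τ _ => ?_
    rw [hb]
  have horbit : orbitSpan n V (bBOp n V k (tprod ℂ v)) =
      (orbitSpan (n - k) V w₀).map L := by
    rw [orbitSpan, orbitSpan, hBB, Submodule.map_span, ← Set.range_comp]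
    apply le_antisymm <;> rw [Submodule.span_le] <;> rintro _ ⟨g, rfl⟩
    · change glAct n V (g : Module.End ℂ V) (L w₀) ∈ _
      rw [hcomm (g : Module.End ℂ V) w₀]
      exact Submodule.smul_mem _ _ (Submodule.subset_span ⟨g, rfl⟩)
    · have hdet : LinearMap.det (g : Module.End ℂ V) ≠ 0 :=
        (g.isUnit.map LinearMap.det).ne_zero
      have hinv : (L ∘ fun g : (Module.End ℂ V)ˣ =>
            glAct (n - k) V (g : Module.End ℂ V) w₀) g
          = (LinearMap.det (g : Module.End ℂ V))⁻¹ •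
            glAct n V (g : Module.End ℂ V) (L w₀) := by
        rw [Function.comp_apply, hcomm (g : Module.End ℂ V) w₀, smul_smul,
          inv_mul_cancel₀ hdet, one_smul]
      rw [hinv]
      exact Submodule.smul_mem _ _ (Submodule.subset_span ⟨g, rfl⟩)
  let e : ↥(orbitSpan n V (bBOp n V k (tprod ℂ v))) ≃ₗ[ℂ] ↥(orbitSpan (n - k) V w₀) :=
    (LinearEquiv.ofEq _ _ horbit).trans
      (Submodule.equivMapOfInjective L hLinj (orbitSpan (n - k) V w₀)).symm
  have key : ∀ y : ↥(orbitSpan n V (bBOp n V k (tprod ℂ v))),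
      L (e y : TP (n - k) V) = (y : TP n V) := by
    intro y
    exact Submodule.map_equivMapOfInjective_symm_apply L hLinj
      (orbitSpan (n - k) V w₀) (LinearEquiv.ofEq _ _ horbit y)
  refine ⟨e, ?_⟩
  intro g x hgx
  apply hLinj
  rw [key ⟨glAct n V (g : Module.End ℂ V) (x : TP n V), hgx⟩, map_smul,
    ← hcomm (g : Module.End ℂ V) (e x : TP (n - k) V), key x]
end
end
end

section
/- Let v_1, …, v_n be vectors in a finite-dimensional complex vector space V with rank partition ρ, and let λ be a partition of n. Then {v_1, …, v_n} satisfies Gamas's condition for λ (i.e., the multiset {v_i} can be partitioned into linearly independent sets whose sizes are the parts of λᵀ) if and only if λ is greater than or equal to ρᵀ in dominance order. -/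
/-!
Common definitions: the right action of `Sₙ` on `V^{⊗n}` by permuting tensor positions,
the diagonal action of `End(V)` (hence `GL(V)`), the span `G(w)` of a `GL(V)`-orbit,
Young symmetrizers, the irreducible character `χ^λ` of `Sₙ`, the symmetrizer `T_λ`,
Gamas's condition, highest weight vectors ("λ appears in M"), the rank partition and
dominance order.
-/

open scoped TensorProduct
open Finset

noncomputable section

set_option linter.unusedSectionVars false
set_option maxHeartbeats 1000000

namespace GP
variable {n : ℕ} {V : Type*} [AddCommGroup V] [Module ℂ V] [FiniteDimensional ℂ V]

variable (v : Fin n → V)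

def sp (S : Finset (Fin n)) : Submodule ℂ V := Submodule.span ℂ (v '' ↑S)

def Ind (S : Finset (Fin n)) : Prop := LinearIndependent ℂ (fun i : S => v i)

variable {v}

lemma ind_set_iff {S : Finset (Fin n)} :
    Ind v S ↔ LinearIndependent ℂ (fun i : (↑S : Set (Fin n)) => v i) := Iff.rfl

lemma sp_mono {S T : Finset (Fin n)} (h : S ⊆ T) : sp v S ≤ sp v T :=
  Submodule.span_mono (Set.image_mono (by exact_mod_cast h))

lemma mem_sp {S : Finset (Fin n)} {x : Fin n} (hx : x ∈ S) : v x ∈ sp v S :=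
  Submodule.subset_span ⟨x, by simpa using hx⟩

lemma ind_empty : Ind v (∅ : Finset (Fin n)) := linearIndependent_empty_type

lemma Ind.mono {S T : Finset (Fin n)} (h : S ⊆ T) (hT : Ind v T) : Ind v S :=
  hT.comp (fun i : S => (⟨i.1, h i.2⟩ : T))
    (fun a b hab => Subtype.ext (by simpa using congrArg Subtype.val hab))

lemma ind_insert_iff {S : Finset (Fin n)} {x : Fin n} (hx : x ∉ S) :
    Ind v (insert x S) ↔ Ind v S ∧ v x ∉ sp v S := by
  rw [ind_set_iff, show ((insert x S : Finset (Fin n)) : Set (Fin n))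
      = insert x (↑S : Set (Fin n)) from Finset.coe_insert x S]
  exact linearIndepOn_insert (by simpa using hx)

lemma ind_insert {S : Finset (Fin n)} {x : Fin n} (hS : Ind v S) (hx : v x ∉ sp v S) :
    Ind v (insert x S) := by
  have hxS : x ∉ S := fun h => hx (mem_sp h)
  exact (ind_insert_iff hxS).2 ⟨hS, hx⟩

lemma Ind.not_mem_span {S : Finset (Fin n)} {x : Fin n} (h : Ind v (insert x S))
    (hx : x ∉ S) : v x ∉ sp v S := ((ind_insert_iff hx).1 h).2

lemma Ind.injOn {S : Finset (Fin n)} (hS : Ind v S) : Set.InjOn v (↑S : Set (Fin n)) := by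
  intro a ha b hb hab
  have := hS.injective (a₁ := ⟨a, ha⟩) (a₂ := ⟨b, hb⟩) (by simpa using hab)
  simpa using this

lemma Ind.finrank_sp {S : Finset (Fin n)} (hS : Ind v S) :
    Module.finrank ℂ (sp v S) = S.card := by
  classical
  letI := Classical.decEq V
  have : Fintype (v '' (↑S : Set (Fin n))) := (S.finite_toSet.image v).fintype
  have h1 : LinearIndependent ℂ ((↑) : (v '' (↑S : Set (Fin n))) → V) :=
    LinearIndepOn.id_image (R := ℂ) (v := v) (s := (↑S : Set (Fin n))) hS
  rw [sp, finrank_span_set_eq_card h1]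
  rw [Set.toFinset_image, Finset.card_image_of_injOn (by simpa using hS.injOn)]
  simp

lemma Ind.card_le_of_le_span {S T : Finset (Fin n)} (hS : Ind v S)
    (h : sp v S ≤ sp v T) : S.card ≤ T.card := by
  classical
  letI := Classical.decEq V
  have h2 : Module.finrank ℂ (sp v T) ≤ T.card := by
    have he : sp v T = Submodule.span ℂ ((T.image v : Finset V) : Set V) := by
      rw [sp]; congr 1; simp
    rw [he]
    exact (finrank_span_finset_le_card (T.image v)).trans (by simpa using Finset.card_image_le)
  calc S.card = Module.finrank ℂ (sp v S) := hS.finrank_sp.symm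
    _ ≤ Module.finrank ℂ (sp v T) := Submodule.finrank_mono h
    _ ≤ T.card := h2

lemma exists_exchange {S T : Finset (Fin n)} (hS : Ind v S) (hT : Ind v T)
    (h : S.card < T.card) : ∃ x ∈ T, x ∉ S ∧ Ind v (insert x S) := by
  by_contra hc
  push_neg at hc
  have hle : sp v T ≤ sp v S := by
    rw [sp, Submodule.span_le]
    rintro _ ⟨x, hx, rfl⟩
    simp only [Finset.mem_coe] at hx
    by_cases hxS : x ∈ S
    · exact mem_sp hxS
    · by_contra hsp
      exact hc x hx hxS (ind_insert hS hsp)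
  exact absurd (hT.card_le_of_le_span hle) (by omega)

lemma image_preimage_eq {A B : Finset (Fin n)} (hB : B ⊆ A) :
    (fun i : A => v i) '' (Subtype.val ⁻¹' (↑B : Set (Fin n))) = v '' ↑B := by
  ext w
  simp only [Set.mem_image, Set.mem_preimage, Finset.mem_coe]
  constructor
  · rintro ⟨⟨a, haA⟩, ha, rfl⟩
    exact ⟨a, ha, rfl⟩
  · rintro ⟨a, ha, rfl⟩
    exact ⟨⟨a, hB ha⟩, ha, rfl⟩

lemma mem_sp_inter {A S T : Finset (Fin n)} (hA : Ind v A) (hS : S ⊆ A) (hT : T ⊆ A)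
    {x : V} (hxS : x ∈ sp v S) (hxT : x ∈ sp v T) : x ∈ sp v (S ∩ T) := by
  classical
  have hSdecomp : S = (S ∩ T) ∪ (S \ T) := by
    ext a; simp only [Finset.mem_union, Finset.mem_inter, Finset.mem_sdiff]; tauto
  have hsplit : sp v S = sp v (S ∩ T) ⊔ sp v (S \ T) := by
    conv_lhs => rw [hSdecomp]
    rw [sp, sp, sp, Finset.coe_union, Set.image_union, Submodule.span_union]
  rw [hsplit, Submodule.mem_sup] at hxS
  obtain ⟨a, ha, b, hb, rfl⟩ := hxS
  have hbT' : b ∈ sp v T := by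
    have hb2 : b = (a + b) - a := by abel
    rw [hb2]
    exact Submodule.sub_mem _ hxT (sp_mono Finset.inter_subset_right ha)
  have hdisj : Disjoint (sp v (S \ T)) (sp v T) := by
    have hd : Disjoint ((↑(S \ T) : Set (Fin n))) (↑T : Set (Fin n)) :=
      Finset.disjoint_coe.2 Finset.sdiff_disjoint
    have hd2 : Disjoint (Subtype.val ⁻¹' (↑(S \ T) : Set (Fin n)) : Set A)
        (Subtype.val ⁻¹' (↑T : Set (Fin n))) := Disjoint.preimage _ hd
    have h3 := hA.disjoint_span_image (R := ℂ) hd2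
    rwa [image_preimage_eq (Finset.sdiff_subset.trans hS), image_preimage_eq hT] at h3
  have hb0 : b = 0 := Submodule.disjoint_def.1 hdisj b hb hbT'
  simpa [hb0] using ha

lemma sp_insert_eq {B : Finset (Fin n)} {z : Fin n} :
    sp v (insert z B) = Submodule.span ℂ (insert (v z) (v '' ↑B)) := by
  rw [sp, Finset.coe_insert, Set.image_insert_eq]

/-- Triangular multi-exchange lemma. -/
lemma lemT : ∀ (s : ℕ) (A : Finset (Fin n)) (_ : Ind v A) (x y : ℕ → Fin n)
    (_ : ∀ l < s, x l ∉ A) (_ : ∀ l < s, y l ∈ A)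
    (_ : ∀ l < s, ∀ m < s, x l = x m → l = m)
    (_ : ∀ l < s, ∀ m < s, y l = y m → l = m)
    (_ : ∀ l < s, v (x l) ∉ sp v (A.erase (y l)))
    (_ : ∀ l m, l < m → m < s → v (x l) ∈ sp v (A.erase (y m))),
    Ind v ((A \ (Finset.range s).image y) ∪ (Finset.range s).image x) := by
  intro s
  induction s with
  | zero => intro A hA x y _ _ _ _ _ _; simpa using hA
  | succ s IH =>
    intro A hA x y hxA hyA hxinj hyinj harc htri
    classical
    have hss : s < s + 1 := Nat.lt_succ_self s
    set A' : Finset (Fin n) := insert (x s) (A.erase (y s)) with hA'def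
    have hxsA : x s ∉ A := hxA s hss
    have hysA : y s ∈ A := hyA s hss
    have hAe : Ind v (A.erase (y s)) := hA.mono (Finset.erase_subset _ _)
    have hA' : Ind v A' := ind_insert hAe (harc s hss)
    have key := IH A' hA' x y ?_ ?_ ?_ ?_ ?_ ?_
    · -- rewrite the set
      have hset : (A' \ (Finset.range s).image y) ∪ (Finset.range s).image x
          = (A \ (Finset.range (s+1)).image y) ∪ (Finset.range (s+1)).image x := by
        ext a
        simp only [hA'def, Finset.mem_union, Finset.mem_sdiff, Finset.mem_insert,
          Finset.mem_erase, Finset.mem_image, Finset.mem_range]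
        constructor
        · rintro (⟨(rfl | ⟨hne, haA⟩), hni⟩ | ⟨j, hj, rfl⟩)
          · exact Or.inr ⟨s, hss, rfl⟩
          · refine Or.inl ⟨haA, ?_⟩
            rintro ⟨j, hj, rfl⟩
            rcases Nat.lt_succ_iff_lt_or_eq.1 hj with hj' | rfl
            · exact hni ⟨j, hj', rfl⟩
            · exact hne rfl
          · exact Or.inr ⟨j, hj.trans hss, rfl⟩
        · rintro (⟨haA, hni⟩ | ⟨j, hj, rfl⟩)
          · refine Or.inl ⟨Or.inr ⟨?_, haA⟩, ?_⟩
            · intro h; exact hni ⟨s, hss, h.symm⟩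
            · rintro ⟨j, hj, rfl⟩; exact hni ⟨j, hj.trans hss, rfl⟩
          · rcases Nat.lt_succ_iff_lt_or_eq.1 hj with hj' | rfl
            · exact Or.inr ⟨j, hj', rfl⟩
            · refine Or.inl ⟨Or.inl rfl, ?_⟩
              rintro ⟨j, hj', h⟩
              exact hxsA (h ▸ hyA j (hj'.trans hss))
      rw [hset] at key
      exact key
    · -- x l ∉ A'
      intro l hl
      simp only [hA'def, Finset.mem_insert, Finset.mem_erase, not_or]
      constructor
      · intro h; exact absurd (hxinj l (hl.trans hss) s hss h) (Nat.ne_of_lt hl)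
      · intro h; exact hxA l (hl.trans hss) h.2
    · -- y l ∈ A'
      intro l hl
      have : y l ≠ y s := fun h => absurd (hyinj l (hl.trans hss) s hss h) (Nat.ne_of_lt hl)
      exact Finset.mem_insert_of_mem (Finset.mem_erase.2 ⟨this, hyA l (hl.trans hss)⟩)
    · intro l hl m hm h; exact hxinj l (hl.trans hss) m (hm.trans hss) h
    · intro l hl m hm h; exact hyinj l (hl.trans hss) m (hm.trans hss) h
    · -- arc condition over A'
      intro l hl
      intro hmem
      have hyl_ne : y l ≠ x s := fun h => hxsA (h ▸ hyA l (hl.trans hss))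
      have hyl_mem : y l ∈ A := hyA l (hl.trans hss)
      set B : Finset (Fin n) := (A.erase (y s)).erase (y l) with hBdef
      have hrw : A'.erase (y l) = insert (x s) B := by
        rw [hA'def, Finset.erase_insert_of_ne (fun h => hyl_ne h.symm)]
      rw [hrw, sp_insert_eq] at hmem
      have hBsub : B ⊆ A.erase (y l) := by
        intro a ha
        simp only [hBdef, Finset.mem_erase] at ha ⊢
        exact ⟨ha.1, ha.2.2⟩
      have hnot : v (x l) ∉ Submodule.span ℂ (v '' ↑B) :=
        fun h => harc l (hl.trans hss) (sp_mono hBsub h)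
      have hexch := mem_span_insert_exchange hmem hnot
      have hle : Submodule.span ℂ (insert (v (x l)) (v '' ↑B)) ≤ sp v (A.erase (y s)) := by
        rw [Submodule.span_le]
        intro w hw
        rcases Set.mem_insert_iff.1 hw with rfl | hw'
        · exact htri l s hl hss
        · apply sp_mono (show B ⊆ A.erase (y s) from Finset.erase_subset _ _)
          exact Submodule.subset_span hw'
      exact harc s hss (hle hexch)
    · -- triangularity over A'
      intro l m hlm hm
      have h1 : v (x l) ∈ sp v (A.erase (y s)) := htri l s (hlm.trans hm) hss
      have h2 : v (x l) ∈ sp v (A.erase (y m)) := htri l m hlm (hm.trans hss)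
      have h3 := mem_sp_inter hA (Finset.erase_subset _ _) (Finset.erase_subset _ _) h1 h2
      have hsub : A.erase (y s) ∩ A.erase (y m) ⊆ A'.erase (y m) := by
        intro a ha
        simp only [Finset.mem_inter, Finset.mem_erase] at ha
        simp only [hA'def, Finset.mem_erase, Finset.mem_insert]
        exact ⟨ha.2.1, Or.inr ⟨ha.1.1, ha.1.2⟩⟩
      exact sp_mono hsub h3

section Families
variable (v)
variable (m : ℕ) (μ : ℕ → ℕ)

/-- a partial partition into independent sets respecting capacities -/
structure GoodF (A : ℕ → Finset (Fin n)) : Prop where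
  ind : ∀ i, Ind v (A i)
  disj : ∀ i j, i ≠ j → Disjoint (A i) (A j)
  card_le : ∀ i, (A i).card ≤ μ i
  empty : ∀ i, m ≤ i → A i = ∅

/-- union of the family -/
def UF (A : ℕ → Finset (Fin n)) : Finset (Fin n) := (Finset.range m).biUnion A

def Arc (A : ℕ → Finset (Fin n)) (x y : Fin n) : Prop :=
  ∃ i < m, x ∉ A i ∧ y ∈ A i ∧ v x ∉ sp v ((A i).erase y)

def Src (A : ℕ → Finset (Fin n)) (x : Fin n) : Prop :=
  ∃ i < m, x ∉ A i ∧ (A i).card < μ i ∧ v x ∉ sp v (A i)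

variable {v m μ}

lemma mem_UF {A : ℕ → Finset (Fin n)} {a : Fin n} :
    a ∈ UF m A ↔ ∃ i < m, a ∈ A i := by
  simp [UF]

lemma not_mem_UF {A : ℕ → Finset (Fin n)} (hA : GoodF v m μ A) {a : Fin n}
    (h : a ∉ UF m A) (i : ℕ) : a ∉ A i := by
  intro hi
  by_cases him : i < m
  · exact h (mem_UF.2 ⟨i, him, hi⟩)
  · rw [hA.empty i (le_of_not_gt him)] at hi; exact absurd hi (Finset.notMem_empty a)

lemma augment : ∀ (t : ℕ) (A : ℕ → Finset (Fin n)), GoodF v m μ A →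
    ∀ u : ℕ → Fin n,
    (∀ a b, a ≤ t → b ≤ t → u a = u b → a = b) →
    (u 0 ∉ UF m A) →
    (∀ j, j < t → Arc v m A (u j) (u (j+1))) →
    Src v m μ A (u t) →
    (∀ j j', j + 1 < j' → j' ≤ t → ¬ Arc v m A (u j) (u j')) →
    (∀ j, j < t → ¬ Src v m μ A (u j)) →
    ∃ A', GoodF v m μ A' ∧ UF m A' = insert (u 0) (UF m A) := by
  intro t
  induction t with
  | zero =>
    intro A hA u _ hu0 _ hsrc _ _
    classical
    obtain ⟨it, hitm, hnotmem, hcap, hspan⟩ := hsrc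
    refine ⟨Function.update A it (insert (u 0) (A it)), ⟨?_, ?_, ?_, ?_⟩, ?_⟩
    · intro i
      rcases eq_or_ne i it with rfl | hne
      · rw [Function.update_self]; exact ind_insert (hA.ind i) hspan
      · rw [Function.update_of_ne hne]; exact hA.ind i
    · intro i j hij
      have hu0' : ∀ b, u 0 ∉ A b := not_mem_UF hA hu0
      rcases eq_or_ne i it with rfl | hnei
      · rw [Function.update_self, Function.update_of_ne (Ne.symm hij)]
        rw [Finset.disjoint_insert_left]
        exact ⟨hu0' j, hA.disj i j hij⟩
      · rw [Function.update_of_ne hnei]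
        rcases eq_or_ne j it with rfl | hnej
        · rw [Function.update_self, Finset.disjoint_insert_right]
          exact ⟨hu0' i, hA.disj i j hij⟩
        · rw [Function.update_of_ne hnej]; exact hA.disj i j hij
    · intro i
      rcases eq_or_ne i it with rfl | hne
      · rw [Function.update_self, Finset.card_insert_of_notMem hnotmem]; omega
      · rw [Function.update_of_ne hne]; exact hA.card_le i
    · intro i hi
      have : i ≠ it := by omega
      rw [Function.update_of_ne this]; exact hA.empty i hi
    · ext a
      simp only [mem_UF, Finset.mem_insert]
      constructor
      · rintro ⟨i, him, hi⟩
        rcases eq_or_ne i it with rfl | hne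
        · rw [Function.update_self, Finset.mem_insert] at hi
          rcases hi with rfl | hi
          · exact Or.inl rfl
          · exact Or.inr ⟨i, him, hi⟩
        · rw [Function.update_of_ne hne] at hi; exact Or.inr ⟨i, him, hi⟩
      · rintro (rfl | ⟨i, him, hi⟩)
        · exact ⟨it, hitm, by rw [Function.update_self]; exact Finset.mem_insert_self _ _⟩
        · rcases eq_or_ne i it with rfl | hne
          · exact ⟨i, him, by rw [Function.update_self]; exact Finset.mem_insert_of_mem hi⟩
          · exact ⟨i, him, by rw [Function.update_of_ne hne]; exact hi⟩
  | succ t IH =>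
    intro A hA u huinj hu0 harcs hsrc hns hnes
    classical
    obtain ⟨it, hitm, hut1_notmem, hcap, hspan⟩ := hsrc
    obtain ⟨c, hcm, hut_not, hut1_mem, harc_t⟩ := harcs t (Nat.lt_succ_self t)
    have hcit : c ≠ it := fun h => hut1_notmem (h ▸ hut1_mem)
    set A1 : ℕ → Finset (Fin n) := fun b =>
      if b = it then insert (u (t+1)) (A it)
      else if b = c then (A c).erase (u (t+1)) else A b with hA1def
    have hA1it : A1 it = insert (u (t+1)) (A it) := by simp [hA1def]
    have hA1c : A1 c = (A c).erase (u (t+1)) := by simp [hA1def, hcit]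
    have hA1other : ∀ b, b ≠ it → b ≠ c → A1 b = A b := by
      intro b h1 h2; simp [hA1def, h1, h2]
    have hA1sub : ∀ b, b ≠ it → A1 b ⊆ A b := by
      intro b h1
      rcases eq_or_ne b c with rfl | h2
      · rw [hA1c]; exact Finset.erase_subset _ _
      · rw [hA1other b h1 h2]
    have huinj' : ∀ a b, a ≤ t+1 → b ≤ t+1 → u a = u b → a = b := huinj
    -- u (t+1) ∉ A b for b ≠ c
    have hownt1 : ∀ b, b ≠ c → u (t+1) ∉ A b := by
      intro b hb hmem
      by_cases hbm : b < m
      · exact absurd (hA.disj b c hb) (by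
          rw [Finset.not_disjoint_iff]; exact ⟨u (t+1), hmem, hut1_mem⟩)
      · rw [hA.empty b (le_of_not_gt hbm)] at hmem; exact absurd hmem (Finset.notMem_empty _)
    have hgood1 : GoodF v m μ A1 := by
      constructor
      · intro i
        rcases eq_or_ne i it with rfl | h1
        · rw [hA1it]; exact ind_insert (hA.ind i) hspan
        rcases eq_or_ne i c with rfl | h2
        · rw [hA1c]; exact (hA.ind i).mono (Finset.erase_subset _ _)
        · rw [hA1other i h1 h2]; exact hA.ind i
      · intro i j hij
        -- reduce to: the only new membership is u (t+1) ∈ A1 it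
        have hmem1 : ∀ b, ∀ a, a ∈ A1 b → (a ∈ A b ∨ (b = it ∧ a = u (t+1))) := by
          intro b a hab
          rcases eq_or_ne b it with rfl | h1
          · rw [hA1it, Finset.mem_insert] at hab
            rcases hab with rfl | hab
            · exact Or.inr ⟨rfl, rfl⟩
            · exact Or.inl hab
          · exact Or.inl (hA1sub b h1 hab)
        rw [Finset.disjoint_left]
        intro a hai haj
        rcases hmem1 i a hai with hi' | ⟨rfl, rfl⟩
        · rcases hmem1 j a haj with hj' | ⟨rfl, rfl⟩
          · exact (Finset.disjoint_left.1 (hA.disj i j hij)) hi' hj'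
          · -- a = u (t+1) in A i with i ≠ it: then i = c but A1 c erased it... a ∈ A1 i
            have : i = c := by
              by_contra hic
              exact hownt1 i hic hi'
            subst this
            rw [hA1c] at hai
            exact (Finset.notMem_erase _ _) hai
        · rcases hmem1 j (u (t+1)) haj with hj' | ⟨rfl, _⟩
          · have : j = c := by
              by_contra hjc
              exact hownt1 j hjc hj'
            subst this
            rw [hA1c] at haj
            exact (Finset.notMem_erase _ _) haj
          · exact hij rfl
      · intro i
        rcases eq_or_ne i it with rfl | h1
        · rw [hA1it, Finset.card_insert_of_notMem hut1_notmem]; omega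
        · exact (Finset.card_le_card (hA1sub i h1)).trans (hA.card_le i)
      · intro i hi
        have h1 : i ≠ it := by omega
        have h2 : i ≠ c := by omega
        rw [hA1other i h1 h2]; exact hA.empty i hi
    have hUF1 : UF m A1 = UF m A := by
      ext a
      simp only [mem_UF]
      constructor
      · rintro ⟨i, him, hi⟩
        rcases eq_or_ne i it with rfl | h1
        · rw [hA1it, Finset.mem_insert] at hi
          rcases hi with rfl | hi
          · exact ⟨c, hcm, hut1_mem⟩
          · exact ⟨i, him, hi⟩
        · exact ⟨i, him, hA1sub i h1 hi⟩
      · rintro ⟨i, him, hi⟩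
        rcases eq_or_ne a (u (t+1)) with rfl | hne
        · exact ⟨it, hitm, by rw [hA1it]; exact Finset.mem_insert_self _ _⟩
        · refine ⟨i, him, ?_⟩
          rcases eq_or_ne i it with rfl | h1
          · rw [hA1it]; exact Finset.mem_insert_of_mem hi
          rcases eq_or_ne i c with rfl | h2
          · rw [hA1c]; exact Finset.mem_erase.2 ⟨hne, hi⟩
          · rw [hA1other i h1 h2]; exact hi
    -- now verify the path hypotheses for A1 with t arcs
    have harcs1 : ∀ j, j < t → Arc v m A1 (u j) (u (j+1)) := by
      intro j hj
      obtain ⟨b, hbm, hj_not, hj1_mem, hbarc⟩ := harcs j (by omega)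
      have hjne : u j ≠ u (t+1) := fun h => by
        have := huinj j (t+1) (by omega) (by omega) h; omega
      have hj1ne : u (j+1) ≠ u (t+1) := fun h => by
        have := huinj (j+1) (t+1) (by omega) (by omega) h; omega
      refine ⟨b, hbm, ?_, ?_, ?_⟩
      · -- u j ∉ A1 b
        rcases eq_or_ne b it with rfl | h1
        · rw [hA1it, Finset.mem_insert]; push_neg; exact ⟨hjne, hj_not⟩
        · intro hmem; exact hj_not (hA1sub b h1 hmem)
      · -- u (j+1) ∈ A1 b
        rcases eq_or_ne b it with rfl | h1
        · rw [hA1it]; exact Finset.mem_insert_of_mem hj1_mem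
        rcases eq_or_ne b c with rfl | h2
        · rw [hA1c]; exact Finset.mem_erase.2 ⟨hj1ne, hj1_mem⟩
        · rw [hA1other b h1 h2]; exact hj1_mem
      · -- span condition
        rcases eq_or_ne b it with rfl | h1
        · rw [hA1it]
          rw [Finset.erase_insert_of_ne (Ne.symm hj1ne)]
          rw [sp_insert_eq]
          intro hmem
          have hnot : v (u j) ∉ Submodule.span ℂ (v '' ↑((A b).erase (u (j+1)))) := hbarc
          have hexch := mem_span_insert_exchange hmem hnot
          -- u j is not an early src hence v (u j) ∈ sp (A it)
          have hnotsrc := hnes j (by omega)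
          have hjin : v (u j) ∈ sp v (A b) := by
            by_contra hcon
            exact hnotsrc ⟨b, hbm, hj_not, hcap, hcon⟩
          have hle : Submodule.span ℂ (insert (v (u j)) (v '' ↑((A b).erase (u (j+1)))))
              ≤ sp v (A b) := by
            rw [Submodule.span_le]
            intro w hw
            rcases Set.mem_insert_iff.1 hw with rfl | hw'
            · exact hjin
            · exact sp_mono (Finset.erase_subset _ _) (Submodule.subset_span hw')
          exact hspan (hle hexch)
        rcases eq_or_ne b c with rfl | h2
        · rw [hA1c]
          intro hmem
          exact hbarc (sp_mono (fun a ha => by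
            simp only [Finset.mem_erase] at ha ⊢
            exact ⟨ha.1, ha.2.2⟩) hmem)
        · rw [hA1other b h1 h2]; exact hbarc
    have hsrc1 : Src v m μ A1 (u t) := by
      refine ⟨c, hcm, ?_, ?_, ?_⟩
      · rw [hA1c]; intro hmem
        exact hut_not (Finset.mem_of_mem_erase hmem)
      · rw [hA1c, Finset.card_erase_of_mem hut1_mem]
        have h1 : 1 ≤ (A c).card := Finset.card_pos.2 ⟨_, hut1_mem⟩
        have := hA.card_le c
        omega
      · rw [hA1c]; exact harc_t
    have hns1 : ∀ j j', j + 1 < j' → j' ≤ t → ¬ Arc v m A1 (u j) (u j') := by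
      intro j j' hjj' hj't harc1
      obtain ⟨b, hbm, hj_not1, hj'_mem1, hbarc1⟩ := harc1
      have hj'ne : u j' ≠ u (t+1) := fun h => by
        have := huinj j' (t+1) (by omega) (by omega) h; omega
      rcases eq_or_ne b it with rfl | h1
      · rw [hA1it, Finset.mem_insert] at hj'_mem1
        rcases hj'_mem1 with h | hj'_mem
        · exact hj'ne h
        · have hj_not : u j ∉ A b := fun h => hj_not1 (by rw [hA1it]; exact Finset.mem_insert_of_mem h)
          have := hns j j' hjj' (by omega)
          have hin : v (u j) ∈ sp v ((A b).erase (u j')) := by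
            by_contra hcon
            exact this ⟨b, hbm, hj_not, hj'_mem, hcon⟩
          apply hbarc1
          rw [hA1it, Finset.erase_insert_of_ne (Ne.symm hj'ne)]
          exact sp_mono (fun a ha => Finset.mem_insert_of_mem ha) hin
      rcases eq_or_ne b c with rfl | h2
      · rw [hA1c] at hj'_mem1 hj_not1 hbarc1
        have hj'_mem : u j' ∈ A b := Finset.mem_of_mem_erase hj'_mem1
        have hj_not : u j ∉ A b := by
          intro h
          rcases eq_or_ne (u j) (u (t+1)) with he | hne2
          · have := huinj j (t+1) (by omega) (by omega) he; omega
          · exact hj_not1 (Finset.mem_erase.2 ⟨hne2, h⟩)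
        have hin1 : v (u j) ∈ sp v ((A b).erase (u j')) := by
          by_contra hcon
          exact hns j j' hjj' (by omega) ⟨b, hbm, hj_not, hj'_mem, hcon⟩
        have hin2 : v (u j) ∈ sp v ((A b).erase (u (t+1))) := by
          by_contra hcon
          exact hns j (t+1) (by omega) (by omega) ⟨b, hbm, hj_not, hut1_mem, hcon⟩
        have := mem_sp_inter (hA.ind b) (Finset.erase_subset _ _) (Finset.erase_subset _ _) hin1 hin2
        apply hbarc1
        refine sp_mono ?_ this
        intro a ha
        simp only [Finset.mem_inter, Finset.mem_erase] at ha ⊢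
        exact ⟨ha.1.1, ha.2.1, ha.1.2⟩
      · rw [hA1other b h1 h2] at hj'_mem1 hj_not1 hbarc1
        exact hns j j' hjj' (by omega) ⟨b, hbm, hj_not1, hj'_mem1, hbarc1⟩
    have hnes1 : ∀ j, j < t → ¬ Src v m μ A1 (u j) := by
      intro j hj hsrc1'
      obtain ⟨b, hbm, hj_not1, hcap1, hspan1⟩ := hsrc1'
      rcases eq_or_ne b it with rfl | h1
      · -- v (u j) ∈ sp (A it) ⊆ sp (A1 it)
        have hj_not : u j ∉ A b := fun h => hj_not1 (by rw [hA1it]; exact Finset.mem_insert_of_mem h)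
        have : v (u j) ∈ sp v (A b) := by
          by_contra hcon
          exact hnes j (by omega) ⟨b, hbm, hj_not, hcap, hcon⟩
        exact hspan1 (sp_mono (by rw [hA1it]; exact fun a ha => Finset.mem_insert_of_mem ha) this)
      rcases eq_or_ne b c with rfl | h2
      · rw [hA1c] at hj_not1 hcap1 hspan1
        have hj_not : u j ∉ A b := by
          intro h
          rcases eq_or_ne (u j) (u (t+1)) with he | hne2
          · have := huinj j (t+1) (by omega) (by omega) he; omega
          · exact hj_not1 (Finset.mem_erase.2 ⟨hne2, h⟩)
        have : v (u j) ∈ sp v ((A b).erase (u (t+1))) := by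
          by_contra hcon
          exact hns j (t+1) (by omega) (by omega) ⟨b, hbm, hj_not, hut1_mem, hcon⟩
        exact hspan1 this
      · rw [hA1other b h1 h2] at hj_not1 hcap1 hspan1
        exact hnes j (by omega) ⟨b, hbm, hj_not1, hcap1, hspan1⟩
    have hu01 : u 0 ∉ UF m A1 := by rw [hUF1]; exact hu0
    obtain ⟨A', hA', hUF'⟩ := IH A1 hgood1 u (fun a b ha hb => huinj a b (by omega) (by omega))
      hu01 harcs1 hsrc1 hns1 hnes1
    exact ⟨A', hA', by rw [hUF', hUF1]⟩

/-- path existence predicate -/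
def PathP (A : ℕ → Finset (Fin n)) (t : ℕ) : Prop :=
  ∃ u : ℕ → Fin n, u 0 ∉ UF m A ∧ (∀ j, j < t → Arc v m A (u j) (u (j+1))) ∧ Src v m μ A (u t)

lemma pathP_shorten {A : ℕ → Finset (Fin n)} {t0 p d : ℕ} (hd : 0 < d) (hpt : p + d ≤ t0)
    (u : ℕ → Fin n) (hu0 : u 0 ∉ UF m A)
    (harcs : ∀ j, j < t0 → Arc v m A (u j) (u (j+1)))
    (hsrc : Src v m μ A (u t0))
    (hbr : p < t0 - d → Arc v m A (u p) (u (p + d + 1)))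
    (hend : p = t0 - d → Src v m μ A (u p)) :
    PathP (v := v) (m := m) (μ := μ) A (t0 - d) := by
  classical
  refine ⟨fun i => if i ≤ p then u i else u (i + d), ?_, ?_, ?_⟩
  · simpa using hu0
  · intro j hj
    dsimp only
    rcases lt_trichotomy j p with h | rfl | h
    · rw [if_pos (le_of_lt h), if_pos (by omega : j + 1 ≤ p)]
      exact harcs j (by omega)
    · rw [if_pos le_rfl, if_neg (by omega : ¬ j + 1 ≤ j)]
      have : j + 1 + d = j + d + 1 := by omega
      rw [this]
      exact hbr (by omega)
    · rw [if_neg (by omega), if_neg (by omega)]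
      have : j + 1 + d = (j + d) + 1 := by omega
      rw [this]
      exact harcs (j + d) (by omega)
  · dsimp only
    rcases eq_or_lt_of_le (show p ≤ t0 - d by omega) with h | h
    · rw [if_pos h.ge]
      exact h ▸ hend h
    · rw [if_neg (by omega)]
      have : t0 - d + d = t0 := by omega
      rw [this]
      exact hsrc

/-- reachability to a source -/
def Rch (A : ℕ → Finset (Fin n)) (x : Fin n) : Prop :=
  ∃ (t : ℕ) (u : ℕ → Fin n), u 0 = x ∧ (∀ j, j < t → Arc v m A (u j) (u (j+1))) ∧ Src v m μ A (u t)

lemma not_rch_src {A : ℕ → Finset (Fin n)} {x : Fin n}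
    (h : ¬ Rch (v := v) (m := m) (μ := μ) A x) : ¬ Src v m μ A x :=
  fun hs => h ⟨0, fun _ => x, rfl, fun j hj => absurd hj (by omega), hs⟩

lemma not_rch_arc {A : ℕ → Finset (Fin n)} {x y : Fin n}
    (h : ¬ Rch (v := v) (m := m) (μ := μ) A x) (ha : Arc v m A x y) :
    ¬ Rch (v := v) (m := m) (μ := μ) A y := by
  rintro ⟨t, u, hu0, harcs, hsrc⟩
  refine h ⟨t + 1, fun i => if i = 0 then x else u (i - 1), by simp, ?_, ?_⟩
  · intro j hj
    dsimp only
    rcases Nat.eq_zero_or_pos j with rfl | hjpos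
    · simpa [hu0] using ha
    · rw [if_neg (by omega), if_neg (by omega)]
      have h1 : j + 1 - 1 = (j - 1) + 1 := by omega
      rw [h1]
      exact harcs (j - 1) (by omega)
  · dsimp only
    rw [if_neg (by omega)]
    simpa using hsrc

/-- at a maximum family, uncovered vertices cannot reach a source -/
lemma max_no_rch {A : ℕ → Finset (Fin n)} (hA : GoodF v m μ A)
    (hmax : ∀ B, GoodF v m μ B → (UF m B).card ≤ (UF m A).card)
    {y : Fin n} (hy : y ∉ UF m A) : ¬ Rch (v := v) (m := m) (μ := μ) A y := by
  rintro ⟨t, u, hu0, harcs, hsrc⟩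
  have hex : ∃ t', PathP (v := v) (m := m) (μ := μ) A t' :=
    ⟨t, u, hu0 ▸ hy, harcs, hsrc⟩
  classical
  set T := Nat.find hex with hTdef
  obtain ⟨w, hw0, hwarc, hwsrc⟩ : PathP (v := v) (m := m) (μ := μ) A T := Nat.find_spec hex
  have hmin : ∀ t', t' < T → ¬ PathP (v := v) (m := m) (μ := μ) A t' :=
    fun t' h => Nat.find_min hex h
  -- injectivity
  have hinj : ∀ a b, a ≤ T → b ≤ T → w a = w b → a = b := by
    intro a b ha hb hab
    by_contra hne
    -- wlog a < b
    rcases lt_or_gt_of_ne hne with h | h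
    · exact hmin (T - (b - a)) (by omega) (pathP_shorten (t0 := T) (p := a) (d := b - a) (by omega) (by omega) w hw0 hwarc hwsrc
        (fun hlt => by
          have he : a + (b - a) = b := by omega
          have := hwarc b (by omega)
          rw [show a + (b-a) + 1 = b + 1 by omega]
          rw [hab]; exact this)
        (fun heq => by
          have hbT : b = T := by omega
          rw [hab, hbT]; exact hwsrc))
    · exact hmin (T - (a - b)) (by omega) (pathP_shorten (t0 := T) (p := b) (d := a - b) (by omega) (by omega) w hw0 hwarc hwsrc
        (fun hlt => by
          have := hwarc a (by omega)
          rw [show b + (a-b) + 1 = a + 1 by omega]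
          rw [← hab]; exact this)
        (fun heq => by
          have haT : a = T := by omega
          rw [← hab, haT]; exact hwsrc))
  -- no shortcut
  have hns : ∀ j j', j + 1 < j' → j' ≤ T → ¬ Arc v m A (w j) (w j') := by
    intro j j' hjj' hj'T harc
    exact hmin (T - (j' - j - 1)) (by omega) (pathP_shorten (t0 := T) (p := j) (d := j' - j - 1) (by omega) (by omega) w hw0 hwarc hwsrc
      (fun hlt => by rw [show j + (j' - j - 1) + 1 = j' by omega]; exact harc)
      (fun heq => by omega))
  -- no early src
  have hnes : ∀ j, j < T → ¬ Src v m μ A (w j) := by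
    intro j hj hsrcj
    exact hmin j hj ⟨w, hw0, fun i hi => hwarc i (by omega), hsrcj⟩
  obtain ⟨A', hA', hUF'⟩ := augment T A hA w hinj hw0 hwarc hwsrc hns hnes
  have : (UF m A').card = (UF m A).card + 1 := by
    rw [hUF', Finset.card_insert_of_notMem hw0]
  have := hmax A' hA'
  omega

lemma goodF_empty : GoodF v m μ (fun _ => (∅ : Finset (Fin n))) := by
  refine ⟨fun _ => ind_empty, fun _ _ _ => Finset.disjoint_empty_left _, fun i => by simp, fun _ _ => rfl⟩

lemma UF_card_le_n {A : ℕ → Finset (Fin n)} : (UF m A).card ≤ n := by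
  have := Finset.card_le_card (Finset.subset_univ (UF m A))
  simpa using this

lemma exists_max_family : ∃ A, GoodF v m μ A ∧
    ∀ B, GoodF v m μ B → (UF m B).card ≤ (UF m A).card := by
  classical
  set P : ℕ → Prop := fun c => ∃ A, GoodF v m μ A ∧ (UF m A).card = c with hP
  have hP0 : P 0 := by
    refine ⟨fun _ => ∅, goodF_empty, ?_⟩
    have h : UF m (fun _ => (∅ : Finset (Fin n))) = ∅ := by ext a; simp [UF]
    rw [h]; simp
  have hspec : P (Nat.findGreatest P n) := Nat.findGreatest_spec (Nat.zero_le n) hP0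
  obtain ⟨A, hA, hcard⟩ := hspec
  refine ⟨A, hA, fun B hB => ?_⟩
  have : (UF m B).card ≤ Nat.findGreatest P n :=
    Nat.le_findGreatest UF_card_le_n ⟨B, hB, rfl⟩
  omega

lemma span_filter : ∀ (B : Finset (Fin n)), ∀ (C : Finset (Fin n)), Ind v B → ∀ {x : V},
    x ∈ sp v B → (∀ z ∈ B, z ∉ C → x ∈ sp v (B.erase z)) → x ∈ sp v (B ∩ C) := by
  classical
  intro B
  induction B using Finset.strongInduction with
  | _ B IH =>
    intro C hB x hx h
    by_cases hsub : B ⊆ C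
    · rwa [Finset.inter_eq_left.2 hsub]
    · obtain ⟨z, hzB, hzC⟩ := Finset.not_subset.1 hsub
      have hx' : x ∈ sp v (B.erase z) := h z hzB hzC
      have hsubB : B.erase z ⊂ B := Finset.erase_ssubset hzB
      have h' : ∀ z' ∈ B.erase z, z' ∉ C → x ∈ sp v ((B.erase z).erase z') := by
        intro z' hz' hz'C
        have h1 : x ∈ sp v (B.erase z') := h z' (Finset.mem_of_mem_erase hz') hz'C
        have h2 := mem_sp_inter hB (Finset.erase_subset _ _) (Finset.erase_subset _ _) hx' h1
        refine sp_mono ?_ h2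
        intro a ha
        simp only [Finset.mem_inter, Finset.mem_erase] at ha ⊢
        exact ⟨ha.2.1, ha.1.1, ha.1.2⟩
      have := IH (B.erase z) hsubB C (hB.mono (Finset.erase_subset _ _)) hx' h'
      refine sp_mono ?_ this
      intro a ha
      simp only [Finset.mem_inter, Finset.mem_erase] at ha ⊢
      exact ⟨ha.1.2, ha.2⟩

lemma certificate : ∃ A, GoodF v m μ A ∧
    (∀ B, GoodF v m μ B → (UF m B).card ≤ (UF m A).card) ∧
    (UF m A = Finset.univ ∨
      ∃ Y : Finset (Fin n), (UF m A).card < n ∧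
        (∀ a, a ∉ UF m A → a ∈ Y) ∧
        (UF m A).card = Yᶜ.card +
          ∑ i ∈ Finset.range m, min (μ i) (Module.finrank ℂ (sp v Y))) := by
  classical
  obtain ⟨A, hA, hmax⟩ := exists_max_family (v := v) (m := m) (μ := μ)
  refine ⟨A, hA, hmax, ?_⟩
  by_cases huniv : UF m A = Finset.univ
  · exact Or.inl huniv
  · right
    obtain ⟨y0, hy0⟩ : ∃ y0, y0 ∉ UF m A := by
      by_contra hc
      push_neg at hc
      exact huniv (Finset.eq_univ_iff_forall.2 hc)
    set Y : Finset (Fin n) := Finset.univ.filter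
      (fun x => ¬ Rch (v := v) (m := m) (μ := μ) A x) with hYdef
    have hmemY : ∀ a, a ∈ Y ↔ ¬ Rch (v := v) (m := m) (μ := μ) A a := by
      intro a; simp [hYdef]
    set r := Module.finrank ℂ (sp v Y) with hrdef
    -- uncovered elements are in Y
    have hunc : ∀ a, a ∉ UF m A → a ∈ Y := fun a ha => (hmemY a).2 (max_no_rch hA hmax ha)
    -- main per-block claim
    have hclaim : ∀ i, i < m → (A i ∩ Y).card = min (μ i) r := by
      intro i him
      have hind : Ind v (A i ∩ Y) := (hA.ind i).mono Finset.inter_subset_left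
      have hcard_le_r : (A i ∩ Y).card ≤ r := by
        rw [← hind.finrank_sp]
        exact Submodule.finrank_mono (sp_mono Finset.inter_subset_right)
      -- condition H : all of Y is spanned by A i ∩ Y
      have Hspan : (∀ y ∈ Y, y ∉ A i → v y ∈ sp v (A i)) → (A i ∩ Y).card = r := by
        intro H
        have hle : sp v Y ≤ sp v (A i ∩ Y) := by
          rw [sp, Submodule.span_le]
          rintro _ ⟨y, hy, rfl⟩
          simp only [Finset.mem_coe] at hy
          by_cases hyA : y ∈ A i
          · exact mem_sp (Finset.mem_inter.2 ⟨hyA, hy⟩)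
          · have h1 : v y ∈ sp v (A i) := H y hy hyA
            have h2 : ∀ z ∈ A i, z ∉ Y → v y ∈ sp v ((A i).erase z) := by
              intro z hz hzY
              by_contra hcon
              have harc : Arc v m A y z := ⟨i, him, hyA, hz, hcon⟩
              exact hzY ((hmemY z).2 (not_rch_arc ((hmemY y).1 hy) harc))
            exact span_filter (A i) Y (hA.ind i) h1 h2
        have : Module.finrank ℂ (sp v (A i ∩ Y)) = r := by
          refine le_antisymm (Submodule.finrank_mono (sp_mono Finset.inter_subset_right))
            (Submodule.finrank_mono hle)
        rw [← this, hind.finrank_sp]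
      by_cases hcap : (A i).card < μ i
      · -- unsaturated
        have H : ∀ y ∈ Y, y ∉ A i → v y ∈ sp v (A i) := by
          intro y hy hyA
          by_contra hcon
          exact (not_rch_src ((hmemY y).1 hy)) ⟨i, him, hyA, hcap, hcon⟩
        have h1 := Hspan H
        have h2 : r ≤ (A i).card := h1 ▸ Finset.card_le_card Finset.inter_subset_left
        omega
      · -- saturated : card = μ i
        have hsat : (A i).card = μ i := le_antisymm (hA.card_le i) (by omega)
        by_cases hAY : A i ⊆ Y
        · have h1 : A i ∩ Y = A i := Finset.inter_eq_left.2 hAY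
          have h2 : (A i).card ≤ r := h1 ▸ hcard_le_r
          rw [h1, hsat]
          omega
        · obtain ⟨x, hxA, hxY⟩ := Finset.not_subset.1 hAY
          have H : ∀ y ∈ Y, y ∉ A i → v y ∈ sp v (A i) := by
            intro y hy hyA
            by_contra hcon
            have harc : Arc v m A y x := ⟨i, him, hyA, hxA, fun hmem =>
              hcon (sp_mono (Finset.erase_subset _ _) hmem)⟩
            exact hxY ((hmemY x).2 (not_rch_arc ((hmemY y).1 hy) harc))
          have h1 := Hspan H
          have h2 : A i ∩ Y ⊂ A i := by
            refine Finset.ssubset_iff_of_subset Finset.inter_subset_left |>.2 ⟨x, hxA, ?_⟩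
            simp [hxY]
          have h3 := Finset.card_lt_card h2
          omega
    -- counting
    have hsplit : (UF m A ∩ Y).card + (UF m A \ Y).card = (UF m A).card :=
      Finset.card_inter_add_card_sdiff _ _
    have hsd : UF m A \ Y = Yᶜ := by
      ext a
      simp only [Finset.mem_sdiff, Finset.mem_compl]
      constructor
      · rintro ⟨_, h2⟩; exact h2
      · intro h; exact ⟨by_contra (fun hc => h (hunc a hc)), h⟩
    have hbi : UF m A ∩ Y = (Finset.range m).biUnion (fun i => A i ∩ Y) := by
      ext a
      simp only [Finset.mem_inter, mem_UF, Finset.mem_biUnion, Finset.mem_range]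
      tauto
    have hcount : (UF m A ∩ Y).card = ∑ i ∈ Finset.range m, min (μ i) r := by
      rw [hbi, Finset.card_biUnion]
      · exact Finset.sum_congr rfl (fun i hi => hclaim i (Finset.mem_range.1 hi))
      · intro i _ j _ hij
        exact Finset.disjoint_of_subset_left Finset.inter_subset_left
          (Finset.disjoint_of_subset_right Finset.inter_subset_left (hA.disj i j hij))
    refine ⟨Y, ?_, hunc, ?_⟩
    · have h1 : UF m A ⊂ Finset.univ := Finset.ssubset_univ_iff.2 huniv
      have := Finset.card_lt_card h1
      simpa using this
    · rw [← hrdef]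
      rw [hsd] at hsplit
      omega

end Families

section Bridge
open Gamas
variable (v : Fin n → V)

lemma mu_ge {k : ℕ} (S : Fin k → Finset (Fin n)) (h : ∀ j, Ind v (S j)) :
    (Finset.univ.biUnion S).card ≤ maxUnion n V v k := by
  classical
  have hle := Finset.le_sup (s := (Finset.univ : Finset (Fin k → Finset (Fin n))))
    (f := fun S : Fin k → Finset (Fin n) =>
      if ∀ j, LinearIndependent ℂ (fun i : (S j : Finset (Fin n)) => v i)
      then (Finset.univ.biUnion S).card else 0) (Finset.mem_univ S)
  have h' : ∀ (j : Fin k), LinearIndependent ℂ fun i : (S j : Finset (Fin n)) => v ↑i := h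
  rw [if_pos h'] at hle
  rw [maxUnion]
  exact hle

lemma mu_le {k c : ℕ}
    (h : ∀ S : Fin k → Finset (Fin n), (∀ j, Ind v (S j)) →
      (Finset.univ.biUnion S).card ≤ c) : maxUnion n V v k ≤ c := by
  classical
  rw [maxUnion]
  apply Finset.sup_le
  intro S _
  split_ifs with hS
  · exact h S hS
  · exact Nat.zero_le c

variable {v}

/-- disjointify a tuple of independent sets into a good family with the same union -/
lemma good_of_tuple {k : ℕ} (S : Fin k → Finset (Fin n)) (h : ∀ j, Ind v (S j)) :
    ∃ A, GoodF v k (fun _ => n + 1) A ∧ UF k A = Finset.univ.biUnion S := by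
  classical
  set d : ℕ → Finset (Fin n) := fun i => if h : i < k then S ⟨i, h⟩ else ∅ with hd
  set A : ℕ → Finset (Fin n) := fun i => d i \ (Finset.range i).biUnion d with hAdef
  have hAsub : ∀ i, A i ⊆ d i := fun i => Finset.sdiff_subset
  have hInd : ∀ i, Ind v (d i) := by
    intro i
    by_cases hik : i < k
    · have hdi : d i = S ⟨i, hik⟩ := dif_pos hik
      rw [hdi]; exact h _
    · have hdi : d i = ∅ := dif_neg hik
      rw [hdi]; exact ind_empty
  refine ⟨A, ⟨fun i => (hInd i).mono (hAsub i), ?_, ?_, ?_⟩, ?_⟩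
  · intro i j hij
    rcases lt_or_gt_of_ne hij with hlt | hlt
    · rw [Finset.disjoint_right]
      intro a ha hai
      have : a ∉ (Finset.range j).biUnion d := (Finset.mem_sdiff.1 ha).2
      exact this (Finset.mem_biUnion.2 ⟨i, Finset.mem_range.2 hlt, hAsub i hai⟩)
    · rw [Finset.disjoint_left]
      intro a ha haj
      have : a ∉ (Finset.range i).biUnion d := (Finset.mem_sdiff.1 ha).2
      exact this (Finset.mem_biUnion.2 ⟨j, Finset.mem_range.2 hlt, hAsub j haj⟩)
  · intro i
    have : (A i).card ≤ n := by
      have := Finset.card_le_card (Finset.subset_univ (A i))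
      simpa using this
    omega
  · intro i hik
    have hdi : d i = ∅ := dif_neg (by omega)
    show d i \ (Finset.range i).biUnion d = ∅
    rw [hdi]
    exact Finset.empty_sdiff _
  · ext a
    simp only [mem_UF, Finset.mem_biUnion, Finset.mem_univ, true_and]
    constructor
    · rintro ⟨i, hik, hai⟩
      have hthis : a ∈ d i := hAsub i hai
      by_cases hik' : i < k
      · rw [show d i = S ⟨i, hik'⟩ from dif_pos hik'] at hthis
        exact ⟨⟨i, hik'⟩, hthis⟩
      · rw [show d i = ∅ from dif_neg hik'] at hthis
        exact absurd hthis (Finset.notMem_empty a)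
    · rintro ⟨j, haj⟩
      have hex : ∃ i, a ∈ d i := ⟨j, by rw [show d (j : ℕ) = S ⟨(j:ℕ), j.2⟩ from dif_pos j.2]; exact haj⟩
      set i0 := Nat.find hex with hi0
      have hmem : a ∈ d i0 := Nat.find_spec hex
      have hi0k : i0 < k := by
        by_contra hc
        rw [show d i0 = ∅ from dif_neg hc] at hmem
        exact absurd hmem (Finset.notMem_empty a)
      refine ⟨i0, hi0k, ?_⟩
      rw [hAdef]
      refine Finset.mem_sdiff.2 ⟨hmem, ?_⟩
      intro hcon
      obtain ⟨i', hi', hai'⟩ := Finset.mem_biUnion.1 hcon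
      exact absurd hmem (by
        have := Nat.find_min hex (Finset.mem_range.1 hi')
        exact absurd hai' this)

/-- the maximum over good families equals maxUnion -/
lemma max_card_eq_mu {k : ℕ} {A : ℕ → Finset (Fin n)}
    (hA : GoodF v k (fun _ => n + 1) A)
    (hmax : ∀ B, GoodF v k (fun _ => n + 1) B → (UF k B).card ≤ (UF k A).card) :
    (UF k A).card = maxUnion n V v k := by
  classical
  apply le_antisymm
  · -- the family as a tuple
    have hbi : UF k A = Finset.univ.biUnion (fun j : Fin k => A j) := by
      ext a
      simp only [mem_UF, Finset.mem_biUnion, Finset.mem_univ, true_and]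
      constructor
      · rintro ⟨i, hik, hai⟩; exact ⟨⟨i, hik⟩, hai⟩
      · rintro ⟨j, haj⟩; exact ⟨j, j.2, haj⟩
    rw [hbi]
    exact mu_ge v _ (fun j => hA.ind j)
  · apply mu_le
    intro S hS
    obtain ⟨B, hB, hUB⟩ := good_of_tuple S hS
    rw [← hUB]
    exact hmax B hB

lemma finrank_sp_le_card (T : Finset (Fin n)) : Module.finrank ℂ (sp v T) ≤ T.card := by
  classical
  letI := Classical.decEq V
  have he : sp v T = Submodule.span ℂ ((T.image v : Finset V) : Set V) := by
    rw [sp]; congr 1; simp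
  rw [he]
  exact (finrank_span_finset_le_card (T.image v)).trans (by simpa using Finset.card_image_le)

/-- upper bound half of the Edmonds formula -/
lemma mu_le_formula (k : ℕ) (S : Finset (Fin n)) :
    maxUnion n V v k ≤ Sᶜ.card + k * Module.finrank ℂ (sp v S) := by
  classical
  apply mu_le
  intro T hT
  have h1 : (Finset.univ.biUnion T).card
      = (Finset.univ.biUnion T ∩ S).card + (Finset.univ.biUnion T \ S).card :=
    (Finset.card_inter_add_card_sdiff _ _).symm
  have h2 : (Finset.univ.biUnion T \ S).card ≤ Sᶜ.card := by
    apply Finset.card_le_card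
    intro a ha
    simp only [Finset.mem_sdiff] at ha
    simpa using ha.2
  have h3 : (Finset.univ.biUnion T ∩ S).card ≤ k * Module.finrank ℂ (sp v S) := by
    have hbi : Finset.univ.biUnion T ∩ S = Finset.univ.biUnion (fun j => T j ∩ S) := by
      ext a
      simp only [Finset.mem_inter, Finset.mem_biUnion, Finset.mem_univ, true_and]
      tauto
    rw [hbi]
    calc (Finset.univ.biUnion fun j => T j ∩ S).card
        ≤ ∑ j : Fin k, (T j ∩ S).card := Finset.card_biUnion_le
      _ ≤ ∑ _j : Fin k, Module.finrank ℂ (sp v S) := by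
          apply Finset.sum_le_sum
          intro j _
          have hind : Ind v (T j ∩ S) := (hT j).mono Finset.inter_subset_left
          rw [← hind.finrank_sp]
          exact Submodule.finrank_mono (sp_mono Finset.inter_subset_right)
      _ = k * Module.finrank ℂ (sp v S) := by
          rw [Finset.sum_const, Finset.card_univ, Fintype.card_fin, smul_eq_mul]
  omega

/-- the Edmonds min formula is attained -/
lemma edmonds (k : ℕ) :
    ∃ S : Finset (Fin n), maxUnion n V v k = Sᶜ.card + k * Module.finrank ℂ (sp v S) := by
  classical
  obtain ⟨A, hA, hmax, hcase⟩ := certificate (v := v) (m := k) (μ := fun _ => n + 1)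
  have hAmu := max_card_eq_mu hA hmax
  rcases hcase with huniv | ⟨Y, hlt, hunc, hform⟩
  · refine ⟨∅, ?_⟩
    have h0 : sp v (∅ : Finset (Fin n)) = ⊥ := by
      rw [sp]; simp
    rw [h0]
    have : Module.finrank ℂ (⊥ : Submodule ℂ V) = 0 := finrank_bot ℂ V
    rw [this, ← hAmu, huniv]
    simp
  · refine ⟨Y, ?_⟩
    rw [← hAmu, hform]
    congr 1
    have hr : Module.finrank ℂ (sp v Y) ≤ n := by
      refine (finrank_sp_le_card Y).trans ?_
      have := Finset.card_le_card (Finset.subset_univ Y)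
      simpa using this
    rw [Finset.sum_congr rfl (fun i _ => by
      rw [min_eq_right (by omega : Module.finrank ℂ (sp v Y) ≤ n + 1)])]
    rw [Finset.sum_const, Finset.card_range, smul_eq_mul]

lemma mu_zero : maxUnion n V v 0 = 0 := by
  apply Nat.le_antisymm _ (Nat.zero_le _)
  apply mu_le
  intro S _
  have : Finset.univ.biUnion S = ∅ := by
    ext a; simp
  rw [this]
  simp

lemma mu_mono (k : ℕ) : maxUnion n V v k ≤ maxUnion n V v (k + 1) := by
  classical
  apply mu_le
  intro S hS
  set S' : Fin (k+1) → Finset (Fin n) := fun j => if h : (j : ℕ) < k then S ⟨j, h⟩ else ∅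
    with hS'def
  have hS' : ∀ j, Ind v (S' j) := by
    intro j
    rw [hS'def]
    dsimp only
    split_ifs with hj
    · exact hS _
    · exact ind_empty
  have hsub : Finset.univ.biUnion S ⊆ Finset.univ.biUnion S' := by
    intro a ha
    obtain ⟨j, _, haj⟩ := Finset.mem_biUnion.1 ha
    refine Finset.mem_biUnion.2 ⟨⟨j, by omega⟩, Finset.mem_univ _, ?_⟩
    rw [hS'def]
    simpa [j.2] using haj
  exact (Finset.card_le_card hsub).trans (mu_ge v S' hS')

lemma mu_mono' {k l : ℕ} (h : k ≤ l) : maxUnion n V v k ≤ maxUnion n V v l := by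
  induction l with
  | zero => rw [Nat.le_zero.1 h]
  | succ l IH =>
    rcases Nat.lt_succ_iff_lt_or_eq.1 (Nat.lt_succ_of_le h) with h' | rfl
    · exact (IH (by omega)).trans (mu_mono l)
    · rfl

lemma mu_le_n (k : ℕ) : maxUnion n V v k ≤ n := by
  apply mu_le
  intro S _
  have := Finset.card_le_card (Finset.subset_univ (Finset.univ.biUnion S))
  simpa using this

lemma telescope (k : ℕ) : ∑ i ∈ Finset.range k, rankPart n V v i = maxUnion n V v k := by
  induction k with
  | zero => rw [mu_zero]; simp
  | succ k IH =>
    rw [Finset.sum_range_succ, IH, rankPart]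
    have := mu_mono (v := v) k
    omega

lemma rankPart_antitone : ∀ {i j : ℕ}, i ≤ j → rankPart n V v j ≤ rankPart n V v i := by
  have hstep : ∀ i, rankPart n V v (i + 1) ≤ rankPart n V v i := by
    intro i
    obtain ⟨S, hS⟩ := edmonds (v := v) (i + 1)
    have h1 := mu_le_formula (v := v) i S
    have h2 := mu_le_formula (v := v) (i + 1 + 1) S
    have h3 := mu_mono (v := v) i
    have h4 := mu_mono (v := v) (i + 1)
    rw [rankPart, rankPart]
    have e1 : (i + 1 + 1) * Module.finrank ℂ (sp v S) + i * Module.finrank ℂ (sp v S)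
        = 2 * ((i+1) * Module.finrank ℂ (sp v S)) := by ring
    omega
  intro i j hij
  induction j with
  | zero => rw [Nat.le_zero.1 hij]
  | succ j IH =>
    rcases Nat.lt_succ_iff_lt_or_eq.1 (Nat.lt_succ_of_le hij) with h' | rfl
    · exact (hstep j).trans (IH (by omega))
    · rfl

end Bridge

/-- a downward closed subset of `range n` is an initial segment -/
lemma initseg {p : ℕ → Prop} [DecidablePred p] {N : ℕ}
    (h : ∀ a b, a ≤ b → p b → p a) :
    (Finset.range N).filter p = Finset.range (((Finset.range N).filter p).card) := by
  set s := (Finset.range N).filter p with hs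
  have hsub : s ⊆ Finset.range N := Finset.filter_subset _ _
  ext k
  simp only [Finset.mem_range]
  constructor
  · intro hk
    have h1 : Finset.range (k + 1) ⊆ s := by
      intro a ha
      have hak : a ≤ k := by simpa [Nat.lt_succ_iff] using Finset.mem_range.1 ha
      have hkmem := Finset.mem_filter.1 hk
      exact Finset.mem_filter.2 ⟨Finset.mem_range.2 (by
        have := Finset.mem_range.1 hkmem.1; omega), h a k hak hkmem.2⟩
    have := Finset.card_le_card h1
    simpa using this
  · intro hk
    by_contra hks
    have hall : ∀ b ∈ s, b < k := by
      intro b hb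
      by_contra hbk
      have hkb : k ≤ b := by omega
      have hbmem := Finset.mem_filter.1 hb
      have hbN := Finset.mem_range.1 hbmem.1
      exact hks (Finset.mem_filter.2 ⟨Finset.mem_range.2 (by omega), h k b hkb hbmem.2⟩)
    have : s ⊆ Finset.range k := fun b hb => Finset.mem_range.2 (hall b hb)
    have := Finset.card_le_card this
    simp only [Finset.card_range] at this
    omega

lemma sum_ite_min (c N : ℕ) :
    ∑ j ∈ Finset.range N, (if j + 1 ≤ c then 1 else 0) = min c N := by
  classical
  rw [← Finset.card_filter]
  have : (Finset.range N).filter (fun j => j + 1 ≤ c) = Finset.range (min c N) := by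
    ext j
    simp only [Finset.mem_filter, Finset.mem_range, lt_min_iff]
    omega
  rw [this, Finset.card_range]

section Bridge2
open Gamas
variable (v : Fin n → V)

lemma sum_rankPartT (N : ℕ) :
    ∑ j ∈ Finset.range N, rankPartT n V v j
      = ∑ i ∈ Finset.range n, min (rankPart n V v i) N := by
  classical
  have h1 : ∀ j, rankPartT n V v j
      = ∑ i ∈ Finset.range n, (if j + 1 ≤ rankPart n V v i then 1 else 0) := by
    intro j
    rw [rankPartT, Finset.card_filter]
  calc ∑ j ∈ Finset.range N, rankPartT n V v j
      = ∑ j ∈ Finset.range N, ∑ i ∈ Finset.range n,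
          (if j + 1 ≤ rankPart n V v i then 1 else 0) := Finset.sum_congr rfl (fun j _ => h1 j)
    _ = ∑ i ∈ Finset.range n, ∑ j ∈ Finset.range N,
          (if j + 1 ≤ rankPart n V v i then 1 else 0) := Finset.sum_comm
    _ = ∑ i ∈ Finset.range n, min (rankPart n V v i) N :=
        Finset.sum_congr rfl (fun i _ => sum_ite_min _ _)

lemma rankPart_le_n (i : ℕ) : rankPart n V v i ≤ n := by
  have := mu_le_n (v := v) (i + 1)
  rw [rankPart]
  omega

end Bridge2

section Young

/-- rows of a Young diagram with at most N cells vanish from N on -/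
lemma rowLen_eq_zero {lam : YoungDiagram} {N k : ℕ} (hcard : lam.card ≤ N) (hk : N ≤ k) :
    lam.rowLen k = 0 := by
  by_contra h
  have h0 : (k, 0) ∈ lam := YoungDiagram.mem_iff_lt_rowLen.2 (by omega)
  have hsub : (Finset.range (k+1)).image (fun i => (i, 0)) ⊆ lam.cells := by
    intro c hc
    obtain ⟨i, hi, rfl⟩ := Finset.mem_image.1 hc
    have : i ≤ k := by simpa [Nat.lt_succ_iff] using Finset.mem_range.1 hi
    exact (YoungDiagram.mem_cells _).2 (lam.up_left_mem this le_rfl h0)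
  have hcard2 := Finset.card_le_card hsub
  rw [Finset.card_image_of_injective _ (fun a b hab => by simpa using hab)] at hcard2
  simp only [Finset.card_range] at hcard2
  have : lam.cells.card = lam.card := rfl
  omega

lemma card_transpose (lam : YoungDiagram) : lam.transpose.card = lam.card := by
  apply Finset.card_bij (fun c _ => c.swap)
  · intro c hc
    rw [YoungDiagram.mem_cells] at *
    exact (YoungDiagram.mem_transpose).1 hc
  · intro a ha b hb hab
    exact Prod.swap_injective hab
  · intro b hb
    refine ⟨b.swap, ?_, by simp⟩
    rw [YoungDiagram.mem_cells] at *
    rw [YoungDiagram.mem_transpose]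
    simpa using hb

/-- double counting of the cells in the first `N` rows -/
lemma sum_rowLen (lam : YoungDiagram) {N : ℕ} (hcard : lam.card ≤ N) :
    ∑ j ∈ Finset.range N, lam.rowLen j = lam.card := by
  classical
  have hfst : ∀ c ∈ lam.cells, c.1 ∈ Finset.range N := by
    intro c hc
    have hc' : c ∈ lam := (YoungDiagram.mem_cells c).1 hc
    have h1 : (c.1, 0) ∈ lam := lam.up_left_mem le_rfl (Nat.zero_le _) (by simpa using hc')
    have h2 : c.1 < lam.colLen 0 := YoungDiagram.mem_iff_lt_colLen.1 h1
    have h3 : lam.colLen 0 ≤ lam.card := by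
      rw [YoungDiagram.colLen_eq_card]
      exact Finset.card_le_card (Finset.filter_subset _ _)
    exact Finset.mem_range.2 (by omega)
  rw [show lam.card = lam.cells.card from rfl, Finset.card_eq_sum_card_fiberwise hfst]
  apply Finset.sum_congr rfl
  intro j _
  rw [YoungDiagram.rowLen_eq_card]
  congr 1

/-- double counting: cells in the first `N` rows, counted by columns -/
lemma sum_min_colLen (lam : YoungDiagram) {N : ℕ} {M : ℕ} (hcard : lam.card ≤ M) :
    ∑ j ∈ Finset.range N, lam.rowLen j
      = ∑ k ∈ Finset.range M, min (lam.transpose.rowLen k) N := by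
  classical
  set P : Finset (ℕ × ℕ) := lam.cells.filter (fun c => c.1 < N) with hP
  -- count P by rows
  have hrows : P.card = ∑ j ∈ Finset.range N, lam.rowLen j := by
    have hfst : ∀ c ∈ P, c.1 ∈ Finset.range N := by
      intro c hc
      exact Finset.mem_range.2 (Finset.mem_filter.1 hc).2
    rw [Finset.card_eq_sum_card_fiberwise hfst]
    apply Finset.sum_congr rfl
    intro j hj
    rw [YoungDiagram.rowLen_eq_card]
    congr 1
    ext c
    simp only [hP, Finset.mem_filter, YoungDiagram.row, Finset.mem_range]
    constructor
    · rintro ⟨⟨h1, _⟩, h3⟩; exact ⟨h1, h3⟩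
    · rintro ⟨h1, h3⟩; exact ⟨⟨h1, h3 ▸ Finset.mem_range.1 hj⟩, h3⟩
  -- count P by columns
  have hsnd : ∀ c ∈ P, c.2 ∈ Finset.range M := by
    intro c hc
    have hc' : c ∈ lam := (YoungDiagram.mem_cells c).1 (Finset.mem_filter.1 hc).1
    have h1 : (0, c.2) ∈ lam := lam.up_left_mem (Nat.zero_le _) le_rfl (by simpa using hc')
    have h2 : c.2 < lam.rowLen 0 := YoungDiagram.mem_iff_lt_rowLen.1 h1
    have h3 : lam.rowLen 0 ≤ lam.card := by
      rw [YoungDiagram.rowLen_eq_card]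
      exact Finset.card_le_card (Finset.filter_subset _ _)
    exact Finset.mem_range.2 (by omega)
  have hcols : P.card = ∑ k ∈ Finset.range M, min (lam.transpose.rowLen k) N := by
    rw [Finset.card_eq_sum_card_fiberwise hsnd]
    apply Finset.sum_congr rfl
    intro k _
    rw [YoungDiagram.rowLen_transpose]
    have : P.filter (fun c => c.2 = k)
        = (Finset.range (min (lam.colLen k) N)).image (fun i => (i, k)) := by
      ext c
      obtain ⟨i, j⟩ := c
      simp only [hP, Finset.mem_filter, Finset.mem_image, Finset.mem_range,
        YoungDiagram.mem_cells, lt_min_iff, Prod.mk.injEq]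
      constructor
      · rintro ⟨⟨hmem, hiN⟩, rfl⟩
        exact ⟨i, ⟨YoungDiagram.mem_iff_lt_colLen.1 hmem, hiN⟩, rfl, rfl⟩
      · rintro ⟨i', ⟨hi1, hi2⟩, rfl, rfl⟩
        exact ⟨⟨YoungDiagram.mem_iff_lt_colLen.2 hi1, hi2⟩, rfl⟩
    rw [this, Finset.card_image_of_injective _ (fun a b hab => by simpa using hab),
      Finset.card_range]
  rw [← hrows, hcols]

end Young

/-- the key combinatorial comparison -/
lemma lemC {ρ μ : ℕ → ℕ} {N : ℕ}
    (hmono : ∀ a b, a ≤ b → μ b ≤ μ a)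
    (hdom : ∀ k, k ≤ n → ∑ j ∈ Finset.range k, μ j ≤ ∑ i ∈ Finset.range k, ρ i)
    (htot : ∑ i ∈ Finset.range n, ρ i = ∑ k ∈ Finset.range n, μ k) :
    ∑ i ∈ Finset.range n, min (ρ i) N ≤ ∑ k ∈ Finset.range n, min (μ k) N := by
  classical
  set K := (((Finset.range n).filter (fun k => N < μ k)).card) with hK
  have hseg : (Finset.range n).filter (fun k => N < μ k) = Finset.range K := by
    rw [hK]
    exact initseg (fun a b hab hb => lt_of_lt_of_le hb (hmono a b hab))
  have hKn : K ≤ n := by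
    rw [hK]
    exact (Finset.card_le_card (Finset.filter_subset _ _)).trans (by simp)
  have hbig : ∀ k, k < K → N < μ k := by
    intro k hk
    have : k ∈ (Finset.range n).filter (fun k => N < μ k) := by
      rw [hseg]; exact Finset.mem_range.2 hk
    exact (Finset.mem_filter.1 this).2
  have hsmall : ∀ k, K ≤ k → k < n → μ k ≤ N := by
    intro k h1 h2
    by_contra hc
    have : k ∈ (Finset.range n).filter (fun k => N < μ k) :=
      Finset.mem_filter.2 ⟨Finset.mem_range.2 h2, by omega⟩
    rw [hseg] at this
    have := Finset.mem_range.1 this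
    omega
  -- split sums at K
  have hsplitρ : ∑ i ∈ Finset.range n, ρ i
      = ∑ i ∈ Finset.range K, ρ i + ∑ i ∈ Finset.Ico K n, ρ i :=
    (Finset.sum_range_add_sum_Ico _ hKn).symm
  have hsplitμ : ∑ k ∈ Finset.range n, μ k
      = ∑ k ∈ Finset.range K, μ k + ∑ k ∈ Finset.Ico K n, μ k :=
    (Finset.sum_range_add_sum_Ico _ hKn).symm
  have hsplitmin : ∑ i ∈ Finset.range n, min (ρ i) N
      = ∑ i ∈ Finset.range K, min (ρ i) N + ∑ i ∈ Finset.Ico K n, min (ρ i) N :=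
    (Finset.sum_range_add_sum_Ico _ hKn).symm
  have hminμ : ∑ k ∈ Finset.range n, min (μ k) N
      = K * N + ∑ k ∈ Finset.Ico K n, μ k := by
    rw [← Finset.sum_range_add_sum_Ico (fun k => min (μ k) N) hKn]
    congr 1
    · rw [Finset.sum_congr rfl (fun k hk => min_eq_right
        (le_of_lt (hbig k (Finset.mem_range.1 hk))))]
      rw [Finset.sum_const, Finset.card_range, smul_eq_mul]
    · apply Finset.sum_congr rfl
      intro k hk
      have := Finset.mem_Ico.1 hk
      exact min_eq_left (hsmall k this.1 this.2)
  have h1 : ∑ i ∈ Finset.range K, min (ρ i) N ≤ K * N := by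
    calc ∑ i ∈ Finset.range K, min (ρ i) N ≤ ∑ _i ∈ Finset.range K, N :=
          Finset.sum_le_sum (fun i _ => min_le_right _ _)
      _ = K * N := by rw [Finset.sum_const, Finset.card_range, smul_eq_mul]
  have h2 : ∑ i ∈ Finset.Ico K n, min (ρ i) N ≤ ∑ i ∈ Finset.Ico K n, ρ i :=
    Finset.sum_le_sum (fun i _ => min_le_left _ _)
  have h3 := hdom K hKn
  omega

section Final
open Gamas

variable (v : Fin n → V)

lemma ind_filter_iff (c : Fin n → ℕ) (k : ℕ) :
    LinearIndependent ℂ (fun i : {i : Fin n // c i = k} => v i)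
      ↔ Ind v (Finset.univ.filter (fun i => c i = k)) := by
  classical
  exact linearIndependent_equiv' (R := ℂ)
    (Equiv.subtypeEquivRight (q := fun i => i ∈ Finset.univ.filter (fun i => c i = k))
      (fun i => by simp))
    (f := fun i : {x : Fin n // x ∈ Finset.univ.filter (fun i => c i = k)} => v ↑i)
    (funext (fun i => rfl))

theorem main (lam : YoungDiagram) (hl : lam.card = n) :
    GamasCondition n V v lam ↔ DominatedBy n (rankPartT n V v) lam.rowLen := by
  classical
  have hlamT : lam.transpose.card = n := by rw [card_transpose, hl]
  have hμtot : ∑ k ∈ Finset.range n, lam.transpose.rowLen k = n := by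
    rw [sum_rowLen lam.transpose (le_of_eq hlamT), hlamT]
  have hlamtot : ∑ j ∈ Finset.range n, lam.rowLen j = n := by
    rw [sum_rowLen lam (le_of_eq hl), hl]
  have hμmono : ∀ a b : ℕ, a ≤ b → lam.transpose.rowLen b ≤ lam.transpose.rowLen a := fun a b hab =>
    lam.transpose.rowLen_anti a b hab
  have hY1 : ∀ N, ∑ j ∈ Finset.range N, lam.rowLen j
      = ∑ k ∈ Finset.range n, min (lam.transpose.rowLen k) N := fun N =>
    sum_min_colLen lam (le_of_eq hl)
  have hμ0 : ∀ k, n ≤ k → lam.transpose.rowLen k = 0 := fun k hk =>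
    rowLen_eq_zero (le_of_eq hlamT) hk
  have hρ_le : ∀ i, rankPart n V v i ≤ n := fun i => rankPart_le_n v i
  have hsum_min_n : ∑ j ∈ Finset.range n, rankPartT n V v j
      = ∑ i ∈ Finset.range n, rankPart n V v i := by
    rw [sum_rankPartT]
    exact Finset.sum_congr rfl (fun i _ => min_eq_left (hρ_le i))
  constructor
  · -- forward
    rintro ⟨c, hcind, hccard⟩
    set B : ℕ → Finset (Fin n) := fun k => Finset.univ.filter (fun i => c i = k) with hBdef
    have hBind : ∀ k, Ind v (B k) := fun k => (ind_filter_iff v c k).1 (hcind k)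
    have hBcard : ∀ k, (B k).card = lam.transpose.rowLen k := fun k => hccard k
    have hBdisj : ∀ k l, k ≠ l → Disjoint (B k) (B l) := by
      intro k l hkl
      rw [Finset.disjoint_left]
      intro a hak hal
      rw [hBdef] at hak hal
      simp only [Finset.mem_filter] at hak hal
      exact hkl (hak.2 ▸ hal.2 ▸ rfl)
    have hMU : ∀ K : ℕ, ∑ k ∈ Finset.range K, lam.transpose.rowLen k ≤ maxUnion n V v K := by
      intro K
      have hdisj' : ∀ i ∈ (Finset.univ : Finset (Fin K)), ∀ j ∈ (Finset.univ : Finset (Fin K)),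
          i ≠ j → Disjoint (B (i : ℕ)) (B (j : ℕ)) :=
        fun i _ j _ hij => hBdisj i j (fun h => hij (Fin.ext h))
      have hcard : (Finset.univ.biUnion (fun j : Fin K => B j)).card
          = ∑ k ∈ Finset.range K, lam.transpose.rowLen k := by
        rw [Finset.card_biUnion hdisj']
        rw [← Fin.sum_univ_eq_sum_range (fun k => lam.transpose.rowLen k) K]
        exact Finset.sum_congr rfl (fun j _ => hBcard j)
      rw [← hcard]
      exact mu_ge v _ (fun j => hBind j)
    have hMUn : maxUnion n V v n = n :=
      le_antisymm (mu_le_n n) (le_of_eq_of_le hμtot.symm (hMU n))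
    have hρtot : ∑ i ∈ Finset.range n, rankPart n V v i = n := by
      rw [telescope, hMUn]
    refine ⟨?_, ?_⟩
    · intro N
      rw [sum_rankPartT, hY1 N]
      refine lemC hμmono ?_ ?_
      · intro k _
        rw [telescope]
        exact hMU k
      · rw [hρtot, hμtot]
    · rw [hsum_min_n, hρtot, hlamtot]
  · -- backward
    rintro ⟨hdom, heq⟩
    have hMUn : maxUnion n V v n = n := by
      have h1 : ∑ j ∈ Finset.range n, rankPartT n V v j = n := by rw [heq, hlamtot]
      rw [← telescope, ← hsum_min_n, h1]
    have hρtot : ∑ i ∈ Finset.range n, rankPart n V v i = n := by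
      rw [telescope, hMUn]
    obtain ⟨A, hA, hmax, hcase⟩ := certificate (v := v) (m := n) (μ := fun k => lam.transpose.rowLen k)
    rcases hcase with huniv | ⟨Y, hlt, hunc, hform⟩
    · -- extract the coloring
      have hcov : ∀ x : Fin n, ∃ i, i < n ∧ x ∈ A i := by
        intro x
        have : x ∈ UF n A := by rw [huniv]; exact Finset.mem_univ x
        obtain ⟨i, hi, hx⟩ := mem_UF.1 this
        exact ⟨i, hi, hx⟩
      set c : Fin n → ℕ := fun x => Classical.choose (hcov x) with hcdef
      have hc1 : ∀ x, c x < n := fun x => (Classical.choose_spec (hcov x)).1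
      have hc2 : ∀ x, x ∈ A (c x) := fun x => (Classical.choose_spec (hcov x)).2
      have hfilter : ∀ k, Finset.univ.filter (fun i => c i = k) = A k := by
        intro k
        ext x
        simp only [Finset.mem_filter, Finset.mem_univ, true_and]
        constructor
        · rintro rfl; exact hc2 x
        · intro hx
          by_contra hne
          have := hA.disj (c x) k hne
          rw [Finset.disjoint_left] at this
          exact this (hc2 x) hx
      -- cards are exactly μ
      have hsum : ∑ k ∈ Finset.range n, (A k).card = n := by
        have h1 : (UF n A).card = ∑ k ∈ Finset.range n, (A k).card :=
          Finset.card_biUnion (fun i _ j _ hij => hA.disj i j hij)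
        rw [← h1, huniv]
        simp
      have hcards : ∀ k, (A k).card = lam.transpose.rowLen k := by
        intro k
        by_cases hk : k < n
        · have hle : ∀ i ∈ Finset.range n, (A i).card ≤ lam.transpose.rowLen i := fun i _ => hA.card_le i
          have := (Finset.sum_eq_sum_iff_of_le hle).1 (by rw [hsum, hμtot])
          exact this k (Finset.mem_range.2 hk)
        · rw [hA.empty k (by omega), hμ0 k (by omega)]
          simp
      exact ⟨c, fun k => (ind_filter_iff v c k).2 (by rw [hfilter k]; exact hA.ind k),
        fun k => by rw [hfilter k]; exact hcards k⟩
    · -- contradiction with dominance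
      exfalso
      set r : ℕ := Module.finrank ℂ (sp v Y) with hrdef
      set K : ℕ := ((Finset.range n).filter (fun i => r < rankPart n V v i)).card with hKdef
      have hseg : (Finset.range n).filter (fun i => r < rankPart n V v i)
          = Finset.range K := by
        rw [hKdef]
        exact initseg (fun a b hab hb => lt_of_lt_of_le hb (rankPart_antitone (v := v) hab))
      have hKn : K ≤ n := by
        rw [hKdef]
        exact (Finset.card_le_card (Finset.filter_subset _ _)).trans (by simp)
      have hbig : ∀ i, i < K → r < rankPart n V v i := by
        intro i hi
        have : i ∈ (Finset.range n).filter (fun i => r < rankPart n V v i) := by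
          rw [hseg]; exact Finset.mem_range.2 hi
        exact (Finset.mem_filter.1 this).2
      have hsmall : ∀ i, K ≤ i → i < n → rankPart n V v i ≤ r := by
        intro i h1 h2
        by_contra hc
        have : i ∈ (Finset.range n).filter (fun i => r < rankPart n V v i) :=
          Finset.mem_filter.2 ⟨Finset.mem_range.2 h2, by omega⟩
        rw [hseg] at this
        have := Finset.mem_range.1 this
        omega
      have hAform : maxUnion n V v K ≤ Yᶜ.card + K * r := mu_le_formula (v := v) K Y
      have hB : ∑ i ∈ Finset.range K, rankPart n V v i = maxUnion n V v K := telescope K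
      have hsplitρ : ∑ i ∈ Finset.range K, rankPart n V v i
          + ∑ i ∈ Finset.Ico K n, rankPart n V v i
          = ∑ i ∈ Finset.range n, rankPart n V v i :=
        Finset.sum_range_add_sum_Ico _ hKn
      have hsplitmin : ∑ i ∈ Finset.range K, min (rankPart n V v i) r
          + ∑ i ∈ Finset.Ico K n, min (rankPart n V v i) r
          = ∑ i ∈ Finset.range n, min (rankPart n V v i) r :=
        Finset.sum_range_add_sum_Ico _ hKn
      have h5 : ∑ i ∈ Finset.range K, min (rankPart n V v i) r = K * r := by
        rw [Finset.sum_congr rfl (fun i hi => min_eq_right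
          (le_of_lt (hbig i (Finset.mem_range.1 hi))))]
        rw [Finset.sum_const, Finset.card_range, smul_eq_mul]
      have h6 : ∑ i ∈ Finset.Ico K n, min (rankPart n V v i) r
          = ∑ i ∈ Finset.Ico K n, rankPart n V v i := by
        apply Finset.sum_congr rfl
        intro i hi
        have := Finset.mem_Ico.1 hi
        exact min_eq_left (hsmall i this.1 this.2)
      have h8 : ∑ i ∈ Finset.range n, min (rankPart n V v i) r
          ≤ ∑ k ∈ Finset.range n, min (lam.transpose.rowLen k) r := by
        rw [← sum_rankPartT, ← hY1 r]
        exact hdom r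
      have hform' : (UF n A).card = Yᶜ.card + ∑ k ∈ Finset.range n, min (lam.transpose.rowLen k) r := hform
      omega

end Final
end GP


open Gamas in
/-- The vectors `v 0, …, v (n-1)` satisfy Gamas's condition for a partition `λ` of `n`
if and only if `λ` is greater than or equal to the transpose `ρᵀ` of their rank
partition `ρ` in dominance order. -/
theorem gamasCondition_iff_dominated (n : ℕ) (V : Type*) [AddCommGroup V] [Module ℂ V]
    [FiniteDimensional ℂ V] (v : Fin n → V) (lam : YoungDiagram) (hl : lam.card = n) :
    GamasCondition n V v lam ↔ DominatedBy n (rankPartT n V v) lam.rowLen :=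
  GP.main v lam hl
end
end
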